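/- arXiv:1907.10379 — 4 statements merged into one kernel-verified Lean document; each statement's English description precedes it below -/
import Mathlib

section
/- Let α₁,…,α_d > 0, let M be a real d×d matrix and Q ∈ ℝ^d, and define the affine map Φ(x) := Mx + Q. Then the following are equivalent: (i) for every s in the max-norm unit sphere S = {s ∈ ℝ^d : max_i |s_i| = 1} and every function s(·) : (0,∞) → ℝ^d with s(x) → s as x → ∞, the vector with i-th coordinate x^{-1/α_i}·(Σ_{j=1}^d M_{ij}·x^{1/α_j}·s_j(x) + Q_i) converges as x → ∞ to the vector with i-th coordinate Σ_{j=1}^d M_{ij}·1{α_i = α_j}·s_j; (ii) M_{ij} = 0 for every pair (i,j) with α_i > α_j. -/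
open Filter Finset

/-- The vector-scaling (VS) condition for the affine map `Φ(x) = Mx + Q`
holds if and only if `M_{ij} = 0` whenever `α_i > α_j`. -/
theorem VS_condition_affine_iff
    (d : ℕ) (α : Fin d → ℝ) (hα : ∀ i, 0 < α i)
    (M : Matrix (Fin d) (Fin d) ℝ) (Q : Fin d → ℝ) :
    (∀ s : Fin d → ℝ, ‖s‖ = 1 →
      ∀ sf : ℝ → Fin d → ℝ, Tendsto sf atTop (nhds s) →
        Tendsto
          (fun x : ℝ => fun i : Fin d =>
            x ^ (-(1 / α i)) * ((∑ j, M i j * (x ^ (1 / α j) * sf x j)) + Q i))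
          atTop
          (nhds (fun i : Fin d => ∑ j, M i j * (if α i = α j then s j else 0))))
    ↔ (∀ i j, α j < α i → M i j = 0) := by
  classical
  constructor
  · intro h i j hij
    by_contra hM
    have hαi := hα i
    have hαj := hα j
    set c : ℝ := 1 / α j - 1 / α i with hc
    have hc0 : 0 < c := by
      have h1 : 1 / α i < 1 / α j := one_div_lt_one_div_of_lt hαj hij
      simp only [hc]; linarith
    set s : Fin d → ℝ := fun k => if k = j then 1 else 0 with hs
    have hnorm : ‖s‖ = 1 := by
      have hsingle : s = Pi.single j (1 : ℝ) := by
        funext k; simp [hs, Pi.single_apply]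
      rw [hsingle, Pi.norm_single]; simp
    have h1 := h s hnorm (fun _ => s) tendsto_const_nhds
    have h2 := tendsto_pi_nhds.mp h1 i
    have hlim : (∑ k, M i k * (if α i = α k then s k else 0)) = 0 := by
      apply Finset.sum_eq_zero
      intro k _
      by_cases hk : k = j
      · subst hk; simp [hij.ne']
      · simp [hs, hk]
    rw [hlim] at h2
    have heq : ∀ᶠ x : ℝ in atTop,
        x ^ (-(1 / α i)) * ((∑ k, M i k * (x ^ (1 / α k) * s k)) + Q i)
          = M i j * x ^ c + Q i * x ^ (-(1 / α i)) := by
      filter_upwards [eventually_gt_atTop (0 : ℝ)] with x hx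
      have hsum : (∑ k, M i k * (x ^ (1 / α k) * s k)) = M i j * x ^ (1 / α j) := by
        rw [Finset.sum_eq_single j]
        · simp [hs]
        · intro k _ hk; simp [hs, hk]
        · intro hj; exact absurd (Finset.mem_univ j) hj
      rw [hsum]
      have hx1 : x ^ (-(1 / α i)) * x ^ (1 / α j) = x ^ c := by
        rw [← Real.rpow_add hx]; congr 1; simp [hc]; ring
      linear_combination M i j * hx1
    have h3 : Tendsto (fun x : ℝ => M i j * x ^ c + Q i * x ^ (-(1 / α i)))
        atTop (nhds 0) := h2.congr' heq
    have hq : Tendsto (fun x : ℝ => Q i * x ^ (-(1 / α i))) atTop (nhds 0) := by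
      have := (tendsto_rpow_neg_atTop (y := 1 / α i) (by positivity)).const_mul (Q i)
      simpa using this
    have h4 : Tendsto (fun x : ℝ => M i j * x ^ c) atTop (nhds 0) := by
      have := h3.sub hq
      simpa using this
    have h5 : Tendsto (fun x : ℝ => M i j * x ^ c * x ^ (-c)) atTop (nhds 0) := by
      have := h4.mul (tendsto_rpow_neg_atTop hc0)
      simpa using this
    have h6 : Tendsto (fun _ : ℝ => M i j) atTop (nhds 0) := by
      refine h5.congr' ?_
      filter_upwards [eventually_gt_atTop (0 : ℝ)] with x hx
      rw [mul_assoc, ← Real.rpow_add hx]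
      simp
    exact hM (tendsto_nhds_unique tendsto_const_nhds h6)
  · intro h s hs sf hsf
    rw [tendsto_pi_nhds]
    intro i
    have hαi := hα i
    have key : Tendsto
        (fun x : ℝ => (∑ j, M i j * (x ^ (1 / α j - 1 / α i) * sf x j))
          + Q i * x ^ (-(1 / α i)))
        atTop (nhds (∑ j, M i j * (if α i = α j then s j else 0))) := by
      have hsum : Tendsto (fun x : ℝ => ∑ j, M i j * (x ^ (1 / α j - 1 / α i) * sf x j))
          atTop (nhds (∑ j, M i j * (if α i = α j then s j else 0))) := by
        apply tendsto_finset_sum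
        intro j _
        have hsfj : Tendsto (fun x => sf x j) atTop (nhds (s j)) :=
          tendsto_pi_nhds.mp hsf j
        rcases lt_trichotomy (α i) (α j) with hlt | heqα | hgt
        · have he : 1 / α j - 1 / α i < 0 := by
            have := one_div_lt_one_div_of_lt hαi hlt
            linarith
          have hpow : Tendsto (fun x : ℝ => x ^ (1 / α j - 1 / α i)) atTop (nhds 0) := by
            have := tendsto_rpow_neg_atTop (y := -(1 / α j - 1 / α i)) (by linarith)
            simpa using this
          have := (hpow.mul hsfj).const_mul (M i j)
          simpa [hlt.ne] using this
        · simp only [heqα, sub_self, Real.rpow_zero, one_mul, eq_self_iff_true, if_true]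
          exact hsfj.const_mul (M i j)
        · have hM0 : M i j = 0 := h i j hgt
          simp only [hM0, zero_mul]
          exact tendsto_const_nhds
      have hq : Tendsto (fun x : ℝ => Q i * x ^ (-(1 / α i))) atTop (nhds 0) := by
        have := (tendsto_rpow_neg_atTop (y := 1 / α i) (by positivity)).const_mul (Q i)
        simpa using this
      have := hsum.add hq
      simpa using this
    refine key.congr' ?_
    filter_upwards [eventually_gt_atTop (0 : ℝ)] with x hx
    rw [mul_add, Finset.mul_sum]
    congr 1
    · apply Finset.sum_congr rfl
      intro j _
      have hx1 : x ^ (-(1 / α i)) * x ^ (1 / α j) = x ^ (1 / α j - 1 / α i) := by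
        rw [← Real.rpow_add hx]; congr 1; ring
      linear_combination (-(sf x j * M i j)) * hx1
    · ring
end

section
/- Under the stated assumptions, lim_{x→∞} x·P( max_{1≤i≤d} a_i^{-1} X_{0,i}^{α_i} > x ) = a₀ · E[ max_{1≤i≤d} a_i^{-1} Θ̃_{0,i}^{α_i} ]; i.e. the max-norm of the standardized vector a^{-1}X₀^{α} has a Pareto-equivalent tail of index 1 with the stated constant. -/
set_option linter.unusedSectionVars false

open MeasureTheory ProbabilityTheory Filter BoundedContinuousFunction

namespace StdMaxAux

noncomputable def hat (t : ℝ) : ℝ := max (1 - |t|) 0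

lemma hat_nonneg (t : ℝ) : 0 ≤ hat t := le_max_right _ _

lemma hat_le_one (t : ℝ) : hat t ≤ 1 :=
  max_le (by linarith [abs_nonneg t]) zero_le_one

lemma hat_continuous : Continuous hat :=
  (continuous_const.sub continuous_abs).max continuous_const

lemma hat_eq_zero {t : ℝ} (h : 1 ≤ |t|) : hat t = 0 := max_eq_right (by linarith)

lemma abs_lt_one_of_hat_ne_zero {t : ℝ} (h : hat t ≠ 0) : |t| < 1 := by
  by_contra hc
  exact h (hat_eq_zero (not_lt.mp hc))

lemma hat_sum : ∀ (n : ℕ) (u : ℝ), 0 ≤ u → u ≤ n →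
    ∑ k ∈ Finset.range (n + 1), hat (u - k) = 1 := by
  intro n
  induction n with
  | zero =>
      intro u h0 hn
      have : u = 0 := le_antisymm (by exact_mod_cast hn) h0
      simp [this, hat]
  | succ n ih =>
      intro u h0 hn
      rw [Finset.sum_range_succ]
      rcases le_total u n with h | h
      · rw [ih u h0 h]
        have hz : hat (u - ((n : ℕ) + 1 : ℕ)) = 0 := by
          apply hat_eq_zero
          have : ((n : ℝ) + 1) - u ≥ 1 := by linarith
          rw [abs_sub_comm, abs_of_nonneg (by push_cast; linarith)]
          push_cast
          linarith
        rw [hz]; ring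
      · rw [Finset.sum_range_succ]
        have hn' : u ≤ (n : ℝ) + 1 := by push_cast at hn ⊢; linarith
        have hz : ∑ k ∈ Finset.range n, hat (u - k) = 0 := by
          apply Finset.sum_eq_zero
          intro k hk
          have hk' : (k : ℝ) ≤ (n : ℝ) - 1 := by
            have := Finset.mem_range.mp hk
            have : (k : ℝ) + 1 ≤ (n : ℝ) := by exact_mod_cast this
            linarith
          exact hat_eq_zero (by rw [abs_of_nonneg (by linarith)]; linarith)
        have h1 : hat (u - n) = 1 - (u - n) := by
          rw [hat, abs_of_nonneg (by linarith)]
          exact max_eq_left (by linarith)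
        have h2 : hat (u - ((n : ℕ) + 1 : ℕ)) = u - n := by
          rw [hat]
          have hc : |u - ((n : ℕ) + 1 : ℕ)| = (n : ℝ) + 1 - u := by
            rw [abs_of_nonpos (by push_cast; linarith)]
            push_cast; ring
          rw [hc, max_eq_left (by linarith : (0:ℝ) ≤ 1 - ((n:ℝ) + 1 - u))]
          ring
        rw [hz, h1, h2]; ring

section Sup

variable {d : ℕ} [NeZero d]

lemma finNonempty : Nonempty (Fin d) := ⟨⟨0, Nat.pos_of_ne_zero (NeZero.ne d)⟩⟩

lemma fin_le_sup (f : Fin d → ℝ) (i : Fin d) : f i ≤ ⨆ j, f j :=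
  le_ciSup (Set.finite_range f).bddAbove i

lemma fin_sup_le {f : Fin d → ℝ} {b : ℝ} (hb : ∀ i, f i ≤ b) : (⨆ j, f j) ≤ b :=
  haveI := finNonempty (d := d)
  ciSup_le hb

lemma fin_inf_le (f : Fin d → ℝ) (i : Fin d) : (⨅ j, f j) ≤ f i :=
  ciInf_le (Set.finite_range f).bddBelow i

lemma fin_sup_attained (f : Fin d → ℝ) : ∃ i, (⨆ j, f j) = f i := by
  haveI := finNonempty (d := d)
  obtain ⟨i, hi⟩ := Finite.exists_max f
  exact ⟨i, le_antisymm (ciSup_le hi) (fin_le_sup f i)⟩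

lemma fin_inf_attained (f : Fin d → ℝ) : ∃ i, (⨅ j, f j) = f i := by
  haveI := finNonempty (d := d)
  obtain ⟨i, hi⟩ := Finite.exists_min f
  exact ⟨i, le_antisymm (ciInf_le (Set.finite_range f).bddBelow i) (le_ciInf hi)⟩

lemma fin_sup_continuous {β : Type*} [TopologicalSpace β] (f : Fin d → β → ℝ)
    (hf : ∀ i, Continuous (f i)) : Continuous fun v => ⨆ i, f i v := by
  haveI := finNonempty (d := d)
  have h : (fun v => ⨆ i, f i v)
      = fun v => Finset.univ.sup' Finset.univ_nonempty (f · v) := by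
    funext v
    rw [Finset.sup'_univ_eq_ciSup]
  rw [h]
  exact Continuous.finset_sup'_apply _ fun i _ => hf i

end Sup

lemma integrable_of_bound {Ω : Type*} [MeasurableSpace Ω] (P : Measure Ω) [IsFiniteMeasure P]
    (F : Ω → ℝ) (b : ℝ) (hm : AEStronglyMeasurable F P) (hb : ∀ᵐ ω ∂P, |F ω| ≤ b) :
    Integrable F P :=
  (integrable_const b).mono' hm (by simpa [Real.norm_eq_abs] using hb)

section Core

variable {d : ℕ} [NeZero d] (α a : Fin d → ℝ)

lemma radius_pos (hα : ∀ i, 0 < α i) (v : Fin d → ℝ) (hv : ∀ i, 0 < v i) :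
    0 < ⨆ i, |v i| ^ α i := by
  haveI := finNonempty (d := d)
  have i : Fin d := Classical.arbitrary (Fin d)
  calc (0:ℝ) < |v i| ^ α i := Real.rpow_pos_of_pos (abs_pos.mpr (hv i).ne') _
    _ ≤ _ := fin_le_sup (fun j => |v j| ^ α j) i

lemma radius_nonneg (v : Fin d → ℝ) : (0:ℝ) ≤ ⨆ i, |v i| ^ α i := by
  haveI := finNonempty (d := d)
  have i : Fin d := Classical.arbitrary (Fin d)
  exact le_trans (Real.rpow_nonneg (abs_nonneg (v i)) (α i)) (fin_le_sup (fun j => |v j| ^ α j) i)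

lemma norm_term {αi : ℝ} (hαi : 0 < αi) {r : ℝ} (hr : 0 < r) (t : ℝ) :
    |r ^ (-(1 / αi)) * t| ^ αi = r⁻¹ * |t| ^ αi := by
  rw [abs_mul, abs_of_nonneg (Real.rpow_nonneg hr.le _),
    Real.mul_rpow (Real.rpow_nonneg hr.le _) (abs_nonneg t),
    ← Real.rpow_mul hr.le]
  congr 1
  rw [show -(1 / αi) * αi = -1 by field_simp, Real.rpow_neg_one]

lemma core_facts (hα : ∀ i, 0 < α i) (ha : ∀ i, 0 < a i)
    (v : Fin d → ℝ) (hv : ∀ i, 0 < v i) :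
    (⨆ i, (a i)⁻¹ * |(⨆ j, |v j| ^ α j) ^ (-(1 / α i)) * v i| ^ α i)
      = (⨆ j, |v j| ^ α j)⁻¹ * (⨆ i, (a i)⁻¹ * |v i| ^ α i) ∧
    0 < (⨆ j, |v j| ^ α j) ∧
    (⨅ i, (a i)⁻¹) * (⨆ j, |v j| ^ α j) ≤ (⨆ i, (a i)⁻¹ * |v i| ^ α i) ∧
    (⨆ i, (a i)⁻¹ * |v i| ^ α i) ≤ (⨆ i, (a i)⁻¹) * (⨆ j, |v j| ^ α j) := by
  haveI := finNonempty (d := d)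
  set r := ⨆ j, |v j| ^ α j with hr
  have hrpos : 0 < r := radius_pos α hα v hv
  have hS : (⨆ i, (a i)⁻¹ * |r ^ (-(1 / α i)) * v i| ^ α i)
      = r⁻¹ * ⨆ i, (a i)⁻¹ * |v i| ^ α i := by
    rw [Real.mul_iSup_of_nonneg (inv_nonneg.mpr hrpos.le)]
    exact iSup_congr fun i => by rw [norm_term (hα i) hrpos]; ring
  have hTle : (⨆ i, (a i)⁻¹ * |v i| ^ α i) ≤ (⨆ i, (a i)⁻¹) * r := by
    apply fin_sup_le
    intro i
    apply mul_le_mul (fin_le_sup (fun j => (a j)⁻¹) i) (fin_le_sup (fun j => |v j| ^ α j) i)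
      (Real.rpow_nonneg (abs_nonneg _) _)
    exact le_trans (inv_nonneg.mpr (ha i).le) (fin_le_sup (fun j => (a j)⁻¹) i)
  have hTge : (⨅ i, (a i)⁻¹) * r ≤ ⨆ i, (a i)⁻¹ * |v i| ^ α i := by
    obtain ⟨i0, hi0⟩ := fin_sup_attained (fun j => |v j| ^ α j)
    calc (⨅ i, (a i)⁻¹) * r ≤ (a i0)⁻¹ * r :=
          mul_le_mul_of_nonneg_right (fin_inf_le _ i0) hrpos.le
      _ = (a i0)⁻¹ * |v i0| ^ α i0 := by rw [hr, hi0]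
      _ ≤ _ := fin_le_sup (fun j => (a j)⁻¹ * |v j| ^ α j) i0
  exact ⟨hS, hrpos, hTge, hTle⟩

lemma theta_facts (hα : ∀ i, 0 < α i) (ha : ∀ i, 0 < a i)
    (w : Fin d → ℝ) (hw : ∀ i, 0 ≤ w i) (hs : (⨆ i, |w i|) = 1) :
    (⨆ i, (a i)⁻¹ * w i ^ α i) = (⨆ i, (a i)⁻¹ * |w i| ^ α i) ∧
    (⨅ i, (a i)⁻¹) ≤ (⨆ i, (a i)⁻¹ * |w i| ^ α i) ∧
    (⨆ i, (a i)⁻¹ * |w i| ^ α i) ≤ ⨆ i, (a i)⁻¹ := by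
  haveI := finNonempty (d := d)
  refine ⟨iSup_congr fun i => by rw [abs_of_nonneg (hw i)], ?_, ?_⟩
  · obtain ⟨i0, hi0⟩ := fin_sup_attained (fun j => |w j|)
    have h1 : |w i0| = 1 := by rw [← hi0, hs]
    calc (⨅ i, (a i)⁻¹) ≤ (a i0)⁻¹ := fin_inf_le _ i0
      _ = (a i0)⁻¹ * |w i0| ^ α i0 := by rw [h1, Real.one_rpow, mul_one]
      _ ≤ _ := fin_le_sup (fun j => (a j)⁻¹ * |w j| ^ α j) i0
  · apply fin_sup_le
    intro i
    have h1 : |w i| ≤ 1 := le_of_le_of_eq (fin_le_sup (fun j => |w j|) i) hs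
    calc (a i)⁻¹ * |w i| ^ α i ≤ (a i)⁻¹ * 1 := by
          refine mul_le_mul_of_nonneg_left ?_ (inv_nonneg.mpr (ha i).le)
          exact Real.rpow_le_one (abs_nonneg _) h1 (hα i).le
      _ = (a i)⁻¹ := mul_one _
      _ ≤ _ := fin_le_sup (fun j => (a j)⁻¹) i

lemma gS_cont (hα : ∀ i, 0 < α i) :
    Continuous fun v : Fin d → ℝ => ⨆ i, (a i)⁻¹ * |v i| ^ α i :=
  fin_sup_continuous _ fun i => continuous_const.mul
    ((Real.continuous_rpow_const (hα i).le).comp (continuous_abs.comp (continuous_apply i)))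

lemma gR_cont (hα : ∀ i, 0 < α i) :
    Continuous fun v : Fin d → ℝ => ⨆ i, |v i| ^ α i :=
  fin_sup_continuous _ fun i =>
    (Real.continuous_rpow_const (hα i).le).comp (continuous_abs.comp (continuous_apply i))

end Core

lemma indicator_le_indicator_pt {Ω : Type*} {A B : Set Ω} {f : Ω → ℝ} (x : Ω)
    (hf : 0 ≤ f x) (h : x ∈ A → f x ≠ 0 → x ∈ B) :
    A.indicator f x ≤ B.indicator f x := by
  by_cases hA : x ∈ A
  · rw [Set.indicator_of_mem hA]
    by_cases h0 : f x = 0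
    · by_cases hB : x ∈ B
      · rw [Set.indicator_of_mem hB]
      · rw [Set.indicator_of_notMem hB, h0]
    · rw [Set.indicator_of_mem (h hA h0)]
  · rw [Set.indicator_of_notMem hA]
    by_cases hB : x ∈ B
    · rw [Set.indicator_of_mem hB]; exact hf
    · rw [Set.indicator_of_notMem hB]

end StdMaxAux

open StdMaxAux Topology

/-- Pareto-equivalent tail of index 1 for the max-norm of the standardized
vector: `lim_{x→∞} x·P(max_i a_i⁻¹ X_{0,i}^{α_i} > x) = a₀·E[max_i a_i⁻¹ Θ̃_{0,i}^{α_i}]`. -/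
theorem standardized_maxnorm_tail
    {Ω : Type*} [MeasurableSpace Ω] (P : Measure Ω) [IsProbabilityMeasure P]
    (d : ℕ) [NeZero d]
    (X : Ω → Fin d → ℝ) (hX_meas : Measurable X)
    (hX_pos : ∀ᵐ ω ∂P, ∀ i, 0 < X ω i)
    (α a : Fin d → ℝ) (hα : ∀ i, 0 < α i) (ha : ∀ i, 0 < a i)
    -- marginal tails
    (htail : ∀ i, Tendsto (fun x : ℝ => x ^ α i * (P {ω | X ω i > x}).toReal)
      atTop (nhds (a i)))
    -- tail of the vector-scaling radius ‖X₀‖_α = max_i |X_{0,i}|^{α_i}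
    (a₀ : ℝ) (ha₀ : 0 < a₀)
    (hradius : Tendsto
      (fun x : ℝ => x * (P {ω | (⨆ i, |X ω i| ^ α i) > x}).toReal)
      atTop (nhds a₀))
    -- spectral component: weak convergence of the conditional law of the self-normalized vector
    (Θ : Ω → Fin d → ℝ) (hΘ_meas : Measurable Θ)
    (hΘ_sphere : ∀ᵐ ω ∂P, (⨆ i, |Θ ω i|) = 1)
    (hweak : ∀ f : (Fin d → ℝ) →ᵇ ℝ,
      Tendsto (fun x : ℝ =>
          ∫ ω, f (fun i => (⨆ j, |X ω j| ^ α j) ^ (-(1 / α i)) * X ω i)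
            ∂(P[|{ω | (⨆ i, |X ω i| ^ α i) > x}]))
        atTop
        (nhds (∫ ω, f (Θ ω) ∂P))) :
    Tendsto
      (fun x : ℝ =>
        x * (P {ω | (⨆ i, (a i)⁻¹ * X ω i ^ α i) > x}).toReal)
      atTop
      (nhds (a₀ * ∫ ω, (⨆ i, (a i)⁻¹ * Θ ω i ^ α i) ∂P)) := by
  haveI : Nonempty (Fin d) := finNonempty
  classical
  -- ## constants
  have hccpos : 0 < ⨅ i, (a i)⁻¹ := by
    obtain ⟨i1, hi1⟩ := fin_inf_attained (fun j => (a j)⁻¹)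
    rw [hi1]; exact inv_pos.mpr (ha i1)
  have hCCpos : 0 < ⨆ i, (a i)⁻¹ :=
    lt_of_lt_of_le (inv_pos.mpr (ha (Classical.arbitrary _)))
      (fin_le_sup (fun j => (a j)⁻¹) (Classical.arbitrary _))
  -- ## measurability
  have hRmeas : Measurable fun ω => ⨆ i, |X ω i| ^ α i :=
    (gR_cont α hα).measurable.comp hX_meas
  have hTmeas : Measurable fun ω => ⨆ i, (a i)⁻¹ * |X ω i| ^ α i :=
    (gS_cont α a hα).measurable.comp hX_meas
  have hSmeas : Measurable fun ω =>
      (⨆ i, |X ω i| ^ α i)⁻¹ * ⨆ i, (a i)⁻¹ * |X ω i| ^ α i := hRmeas.inv.mul hTmeas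
  have hGmeas : Measurable fun ω => ⨆ i, (a i)⁻¹ * |Θ ω i| ^ α i :=
    (gS_cont α a hα).measurable.comp hΘ_meas
  -- ## eventually positive measure of the radius tail
  have hPne : ∀ᶠ x in atTop, P {ω | (⨆ i, |X ω i| ^ α i) > x} ≠ 0 := by
    have h1 := hradius.eventually_const_lt (half_lt_self ha₀)
    filter_upwards [h1] with x hx
    intro hzero
    rw [hzero] at hx
    simp only [ENNReal.toReal_zero, mul_zero] at hx
    linarith
  -- ## pointwise a.e. facts
  have hae_core : ∀ᵐ ω ∂P,
      (⨆ i, (a i)⁻¹ * |(⨆ j, |X ω j| ^ α j) ^ (-(1 / α i)) * X ω i| ^ α i)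
        = (⨆ j, |X ω j| ^ α j)⁻¹ * (⨆ i, (a i)⁻¹ * |X ω i| ^ α i) ∧
      0 < (⨆ j, |X ω j| ^ α j) ∧
      (⨅ i, (a i)⁻¹) * (⨆ j, |X ω j| ^ α j) ≤ (⨆ i, (a i)⁻¹ * |X ω i| ^ α i) ∧
      (⨆ i, (a i)⁻¹ * |X ω i| ^ α i) ≤ (⨆ i, (a i)⁻¹) * (⨆ j, |X ω j| ^ α j) := by
    filter_upwards [hX_pos] with ω hω
    exact core_facts α a hα ha (X ω) hω
  -- ## nonnegativity of the spectral vector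
  have hΘpos : ∀ᵐ ω ∂P, ∀ i, 0 ≤ Θ ω i := by
    rw [ae_all_iff]
    intro i
    have hcont : Continuous fun v : Fin d → ℝ => min (max (-(v i)) 0) 1 :=
      (((continuous_apply i).neg).max continuous_const).min continuous_const
    set F : (Fin d → ℝ) →ᵇ ℝ := BoundedContinuousFunction.ofNormedAddCommGroup
      (fun v => min (max (-(v i)) 0) 1) hcont 1 (fun v => by
        rw [Real.norm_eq_abs, abs_le]
        exact ⟨le_trans (by norm_num) (le_min (le_max_right _ _) zero_le_one),
          min_le_right _ _⟩) with hFdef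
    have hFv : ∀ v, F v = min (max (-(v i)) 0) 1 := fun v => by rw [hFdef]; rfl
    have hz : ∀ᶠ x in atTop,
        (∫ ω, F (fun i => (⨆ j, |X ω j| ^ α j) ^ (-(1 / α i)) * X ω i)
          ∂(P[|{ω | (⨆ i, |X ω i| ^ α i) > x}])) = 0 := by
      filter_upwards [hPne] with x hx
      have hae0 : ∀ᵐ ω ∂P,
          F (fun i => (⨆ j, |X ω j| ^ α j) ^ (-(1 / α i)) * X ω i) = 0 := by
        filter_upwards [hX_pos] with ω hω
        rw [hFv]
        have h0 : 0 ≤ (⨆ j, |X ω j| ^ α j) ^ (-(1 / α i)) * X ω i :=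
          mul_nonneg (Real.rpow_nonneg (radius_nonneg α (X ω)) _) (hω i).le
        rw [max_eq_right (neg_nonpos.mpr h0), min_eq_left zero_le_one]
      exact integral_eq_zero_of_ae (Measure.ae_smul_measure (ae_restrict_of_ae hae0) _)
    have hlim0 : Tendsto (fun x : ℝ =>
        ∫ ω, F (fun i => (⨆ j, |X ω j| ^ α j) ^ (-(1 / α i)) * X ω i)
          ∂(P[|{ω | (⨆ i, |X ω i| ^ α i) > x}])) atTop (𝓝 0) :=
      Tendsto.congr' (by filter_upwards [hz] with x hx; exact hx.symm) tendsto_const_nhds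
    have hint0 : ∫ ω, F (Θ ω) ∂P = 0 := tendsto_nhds_unique (hweak F) hlim0
    have hnn : 0 ≤ᵐ[P] fun ω => F (Θ ω) :=
      Filter.Eventually.of_forall fun ω => by
        show (0:ℝ) ≤ F (Θ ω)
        rw [hFv]
        exact le_min (le_max_right _ _) zero_le_one
    have hmeasFΘ : Measurable fun ω => F (Θ ω) := F.continuous.measurable.comp hΘ_meas
    have hint : Integrable (fun ω => F (Θ ω)) P := by
      apply integrable_of_bound P _ 1 hmeasFΘ.aestronglyMeasurable
      refine Filter.Eventually.of_forall fun ω => ?_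
      show |F (Θ ω)| ≤ 1
      rw [hFv]
      exact abs_le.mpr ⟨le_trans (by norm_num) (le_min (le_max_right _ _) zero_le_one),
        min_le_right _ _⟩
    have hzero := (integral_eq_zero_iff_of_nonneg_ae hnn hint).mp hint0
    filter_upwards [hzero] with ω hω
    simp only [Pi.zero_apply] at hω
    by_contra hneg
    push_neg at hneg
    have hgt : 0 < min (max (-(Θ ω i)) 0) 1 :=
      lt_min (lt_max_iff.mpr (Or.inl (by linarith))) one_pos
    rw [hFv] at hω
    linarith
  have hΘfacts : ∀ᵐ ω ∂P,
      (⨆ i, (a i)⁻¹ * Θ ω i ^ α i) = (⨆ i, (a i)⁻¹ * |Θ ω i| ^ α i) ∧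
      (⨅ i, (a i)⁻¹) ≤ (⨆ i, (a i)⁻¹ * |Θ ω i| ^ α i) ∧
      (⨆ i, (a i)⁻¹ * |Θ ω i| ^ α i) ≤ (⨆ i, (a i)⁻¹) := by
    filter_upwards [hΘpos, hΘ_sphere] with ω h1 h2
    exact theta_facts α a hα ha (Θ ω) h1 h2
  have hGint : Integrable (fun ω => ⨆ i, (a i)⁻¹ * |Θ ω i| ^ α i) P := by
    apply integrable_of_bound P _ (⨆ i, (a i)⁻¹) hGmeas.aestronglyMeasurable
    filter_upwards [hΘfacts] with ω hω
    exact abs_le.mpr ⟨by linarith [hω.2.1, hω.2.2], hω.2.2⟩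
  -- ## rewrite the goal (remove absolute values)
  have hgoalint : ∫ ω, (⨆ i, (a i)⁻¹ * Θ ω i ^ α i) ∂P
      = ∫ ω, (⨆ i, (a i)⁻¹ * |Θ ω i| ^ α i) ∂P :=
    integral_congr_ae (by filter_upwards [hΘfacts] with ω hω; exact hω.1)
  have hgoalset : ∀ x : ℝ, P {ω | (⨆ i, (a i)⁻¹ * X ω i ^ α i) > x}
      = P {ω | (⨆ i, (a i)⁻¹ * |X ω i| ^ α i) > x} := by
    intro x
    apply measure_congr
    rw [Filter.eventuallyEq_set]
    filter_upwards [hX_pos] with ω hω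
    have hsup : (⨆ i, (a i)⁻¹ * X ω i ^ α i) = ⨆ i, (a i)⁻¹ * |X ω i| ^ α i :=
      iSup_congr fun i => by rw [abs_of_nonneg (hω i).le]
    show ((⨆ i, (a i)⁻¹ * X ω i ^ α i) > x) ↔ ((⨆ i, (a i)⁻¹ * |X ω i| ^ α i) > x)
    rw [hsup]
  rw [hgoalint]
  rw [show (fun x : ℝ => x * (P {ω | (⨆ i, (a i)⁻¹ * X ω i ^ α i) > x}).toReal)
      = fun x : ℝ => x * (P {ω | (⨆ i, (a i)⁻¹ * |X ω i| ^ α i) > x}).toReal from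
    funext fun x => by rw [hgoalset x]]
  -- ## key lemma: joint limit for one continuous test function and one scaled level
  have hlemA : ∀ s : ℝ, 0 < s → ∀ F : (Fin d → ℝ) →ᵇ ℝ,
      Tendsto (fun x => x * ∫ ω in {ω | (⨆ i, |X ω i| ^ α i) > x / s},
          F (fun i => (⨆ j, |X ω j| ^ α j) ^ (-(1 / α i)) * X ω i) ∂P) atTop
        (𝓝 ((s * a₀) * ∫ ω, F (Θ ω) ∂P)) := by
    intro s hs F
    have hxs : Tendsto (fun x : ℝ => x / s) atTop atTop :=
      tendsto_id.atTop_div_const hs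
    have h1 : Tendsto (fun x : ℝ =>
        s * ((x / s) * (P {ω | (⨆ i, |X ω i| ^ α i) > x / s}).toReal)) atTop
        (𝓝 (s * a₀)) := (hradius.comp hxs).const_mul s
    have h2 := (hweak F).comp hxs
    have h3 := h1.mul h2
    apply Tendsto.congr' ?_ h3
    filter_upwards [hxs.eventually hPne, eventually_gt_atTop (0:ℝ)] with x hne hx
    have hfin : (P {ω | (⨆ i, |X ω i| ^ α i) > x / s}).toReal ≠ 0 :=
      ENNReal.toReal_ne_zero.mpr ⟨hne, measure_ne_top _ _⟩
    have hcond : (P[|{ω | (⨆ i, |X ω i| ^ α i) > x / s}])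
        = (P {ω | (⨆ i, |X ω i| ^ α i) > x / s})⁻¹
            • P.restrict {ω | (⨆ i, |X ω i| ^ α i) > x / s} := rfl
    show s * ((x / s) * (P {ω | (⨆ i, |X ω i| ^ α i) > x / s}).toReal)
        * (∫ ω, F (fun i => (⨆ j, |X ω j| ^ α j) ^ (-(1 / α i)) * X ω i)
            ∂(P[|{ω | (⨆ i, |X ω i| ^ α i) > x / s}]))
      = x * ∫ ω in {ω | (⨆ i, |X ω i| ^ α i) > x / s},
          F (fun i => (⨆ j, |X ω j| ^ α j) ^ (-(1 / α i)) * X ω i) ∂P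
    rw [hcond, integral_smul_measure, smul_eq_mul, ENNReal.toReal_inv]
    generalize (∫ ω in {ω | (⨆ i, |X ω i| ^ α i) > x / s},
        F (fun i => (⨆ j, |X ω j| ^ α j) ^ (-(1 / α i)) * X ω i) ∂P) = I
    generalize (P {ω | (⨆ i, |X ω i| ^ α i) > x / s}).toReal = A at hfin ⊢
    rw [show s * (x / s * A) * (A⁻¹ * I) = (s / s) * (A * A⁻¹) * (x * I) by ring,
      div_self hs.ne', mul_inv_cancel₀ hfin, one_mul, one_mul]
  -- ## the ε-argument
  rw [Metric.tendsto_nhds]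
  intro ε hε
  set c : ℝ := ⨅ i, (a i)⁻¹ with hc_def
  set C : ℝ := ⨆ i, (a i)⁻¹ with hC_def
  set δ : ℝ := min (c/4) (ε/(8*(a₀+1))) with hδ_def
  have hδpos : 0 < δ := lt_min (by linarith) (by positivity)
  have hδc : δ ≤ c/4 := min_le_left _ _
  have hδε : 2*a₀*δ ≤ ε/4 := by
    have h1 : δ ≤ ε/(8*(a₀+1)) := min_le_right _ _
    have h2 : 0 < (8:ℝ)*(a₀+1) := by positivity
    have hq0 : (0:ℝ) ≤ ε/(8*(a₀+1)) := by positivity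
    have key : ε/(8*(a₀+1)) * (8*(a₀+1)) = ε := div_mul_cancel₀ _ h2.ne'
    nlinarith [mul_le_mul_of_nonneg_left h1 (by linarith : (0:ℝ) ≤ 2*a₀),
      mul_nonneg hq0 ha₀.le]
  set n : ℕ := ⌈C/δ⌉₊ with hn_def
  have hnC : C ≤ c/2 + (n:ℝ)*δ := by
    have h1 : C/δ ≤ (n:ℝ) := Nat.le_ceil _
    rw [div_le_iff₀ hδpos] at h1
    linarith
  have hψsum : ∀ t : ℝ, c ≤ t → t ≤ C →
      ∑ k ∈ Finset.range (n+1), hat ((t - c/2)/δ - (k:ℝ)) = 1 := by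
    intro t h1 h2
    apply hat_sum
    · exact div_nonneg (by linarith) hδpos.le
    · rw [div_le_iff₀ hδpos]
      linarith
  have hψsupp : ∀ (k : ℕ) (t : ℝ), hat ((t - c/2)/δ - (k:ℝ)) ≠ 0 →
      |t - (c/2 + (k:ℝ)*δ)| < δ := by
    intro k t hk
    have h1 := abs_lt_one_of_hat_ne_zero hk
    have heq : (t - c/2)/δ - (k:ℝ) = (t - (c/2 + (k:ℝ)*δ))/δ := by
      field_simp
      ring
    rw [heq, abs_div, abs_of_pos hδpos, div_lt_one hδpos] at h1
    exact h1
  have hψcont : ∀ k : ℕ, Continuous fun t : ℝ => hat ((t - c/2)/δ - (k:ℝ)) := fun k =>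
    hat_continuous.comp (((continuous_id.sub continuous_const).div_const δ).sub continuous_const)
  have hψGmeas : ∀ k : ℕ, Measurable fun ω => hat ((((⨆ i, (a i)⁻¹ * |Θ ω i| ^ α i)) - c/2)/δ - (k:ℝ)) :=
    fun k => (hψcont k).measurable.comp hGmeas
  have hψGint : ∀ k : ℕ, Integrable (fun ω => hat ((((⨆ i, (a i)⁻¹ * |Θ ω i| ^ α i)) - c/2)/δ - (k:ℝ))) P :=
    fun k => integrable_of_bound P _ 1 (hψGmeas k).aestronglyMeasurable
      (Filter.Eventually.of_forall fun ω => by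
        rw [abs_of_nonneg (hat_nonneg _)]; exact hat_le_one _)
  have hψSXmeas : ∀ k : ℕ, Measurable fun ω => hat (((((⨆ i, |X ω i| ^ α i)⁻¹ * ⨆ i, (a i)⁻¹ * |X ω i| ^ α i)) - c/2)/δ - (k:ℝ)) :=
    fun k => (hψcont k).measurable.comp hSmeas
  have hψSXint : ∀ k : ℕ, Integrable (fun ω => hat (((((⨆ i, |X ω i| ^ α i)⁻¹ * ⨆ i, (a i)⁻¹ * |X ω i| ^ α i)) - c/2)/δ - (k:ℝ))) P :=
    fun k => integrable_of_bound P _ 1 (hψSXmeas k).aestronglyMeasurable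
      (Filter.Eventually.of_forall fun ω => by
        rw [abs_of_nonneg (hat_nonneg _)]; exact hat_le_one _)
  -- per-term limits
  have hterm : ∀ (k : ℕ) (s : ℝ), 0 < s →
      Tendsto (fun x => x * ∫ ω, Set.indicator {ω | (⨆ i, |X ω i| ^ α i) > x / s}
          (fun ω => hat (((((⨆ i, |X ω i| ^ α i)⁻¹ * ⨆ i, (a i)⁻¹ * |X ω i| ^ α i)) - c/2)/δ - (k:ℝ))) ω ∂P) atTop
        (𝓝 ((s * a₀) * ∫ ω, hat ((((⨆ i, (a i)⁻¹ * |Θ ω i| ^ α i)) - c/2)/δ - (k:ℝ)) ∂P)) := by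
    intro k s hs
    have hb : ∀ v : Fin d → ℝ,
        ‖hat (((⨆ i, (a i)⁻¹ * |v i| ^ α i) - c/2)/δ - (k:ℝ))‖ ≤ 1 :=
      fun v => by rw [Real.norm_eq_abs, abs_of_nonneg (hat_nonneg _)]; exact hat_le_one _
    set F : (Fin d → ℝ) →ᵇ ℝ := BoundedContinuousFunction.ofNormedAddCommGroup
      (fun v => hat (((⨆ i, (a i)⁻¹ * |v i| ^ α i) - c/2)/δ - (k:ℝ)))
      ((hψcont k).comp (gS_cont α a hα)) 1 hb with hFdef
    have hFv : ∀ v, F v = hat (((⨆ i, (a i)⁻¹ * |v i| ^ α i) - c/2)/δ - (k:ℝ)) :=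
      fun v => by rw [hFdef]; rfl
    have h1 := hlemA s hs F
    have h2 : ∫ ω, F (Θ ω) ∂P = ∫ ω, hat ((((⨆ i, (a i)⁻¹ * |Θ ω i| ^ α i)) - c/2)/δ - (k:ℝ)) ∂P :=
      integral_congr_ae (Filter.Eventually.of_forall fun ω => hFv (Θ ω))
    rw [h2] at h1
    apply h1.congr
    intro x
    congr 1
    rw [← integral_indicator (measurableSet_lt measurable_const hRmeas)]
    apply integral_congr_ae
    filter_upwards [hae_core] with ω hω
    by_cases hmem : ω ∈ {ω | (⨆ i, |X ω i| ^ α i) > x / s}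
    · rw [Set.indicator_of_mem hmem, Set.indicator_of_mem hmem, hFv, hω.1]
    · rw [Set.indicator_of_notMem hmem, Set.indicator_of_notMem hmem]
  have hUp : Tendsto (fun x => ∑ k ∈ Finset.range (n+1), x * ∫ ω, Set.indicator {ω | (⨆ i, |X ω i| ^ α i) > x / (c/2 + (k:ℝ)*δ + δ)} (fun ω => hat (((((⨆ i, |X ω i| ^ α i)⁻¹ * ⨆ i, (a i)⁻¹ * |X ω i| ^ α i)) - c/2)/δ - (k:ℝ))) ω ∂P) atTop
      (𝓝 (∑ k ∈ Finset.range (n+1), (((c/2 + (k:ℝ)*δ + δ) * a₀) * ∫ ω, hat ((((⨆ i, (a i)⁻¹ * |Θ ω i| ^ α i)) - c/2)/δ - (k:ℝ)) ∂P))) :=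
    tendsto_finset_sum _ fun k _ => hterm k (c/2 + (k:ℝ)*δ + δ) (by positivity)
  have hLo : Tendsto (fun x => ∑ k ∈ Finset.range (n+1), x * ∫ ω, Set.indicator {ω | (⨆ i, |X ω i| ^ α i) > x / (c/2 + (k:ℝ)*δ - δ)} (fun ω => hat (((((⨆ i, |X ω i| ^ α i)⁻¹ * ⨆ i, (a i)⁻¹ * |X ω i| ^ α i)) - c/2)/δ - (k:ℝ))) ω ∂P) atTop
      (𝓝 (∑ k ∈ Finset.range (n+1), (((c/2 + (k:ℝ)*δ - δ) * a₀) * ∫ ω, hat ((((⨆ i, (a i)⁻¹ * |Θ ω i| ^ α i)) - c/2)/δ - (k:ℝ)) ∂P))) :=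
    tendsto_finset_sum _ fun k _ => hterm k (c/2 + (k:ℝ)*δ - δ) (by
      have : (0:ℝ) ≤ (k:ℝ)*δ := by positivity
      linarith)
  -- bounds on the limit sums
  have hsum_int : ∀ b : ℕ → ℝ,
      ∑ k ∈ Finset.range (n+1), (b k) * ∫ ω, hat ((((⨆ i, (a i)⁻¹ * |Θ ω i| ^ α i)) - c/2)/δ - (k:ℝ)) ∂P
        = ∫ ω, (∑ k ∈ Finset.range (n+1), (b k) * hat ((((⨆ i, (a i)⁻¹ * |Θ ω i| ^ α i)) - c/2)/δ - (k:ℝ))) ∂P := by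
    intro b
    rw [integral_finset_sum _ (fun k _ => (hψGint k).const_mul (b k))]
    exact Finset.sum_congr rfl fun k _ => (integral_const_mul _ _).symm
  have hsumint : Integrable (fun ω => ∑ k ∈ Finset.range (n+1),
      (c/2 + (k:ℝ)*δ + δ) * hat ((((⨆ i, (a i)⁻¹ * |Θ ω i| ^ α i)) - c/2)/δ - (k:ℝ))) P :=
    integrable_finset_sum _ fun k _ => (hψGint k).const_mul _
  have hsumint' : Integrable (fun ω => ∑ k ∈ Finset.range (n+1),
      (c/2 + (k:ℝ)*δ - δ) * hat ((((⨆ i, (a i)⁻¹ * |Θ ω i| ^ α i)) - c/2)/δ - (k:ℝ))) P :=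
    integrable_finset_sum _ fun k _ => (hψGint k).const_mul _
  have hconstint : Integrable (fun _ : Ω => (2:ℝ)*δ) P := integrable_const _
  have hEplus : ∫ ω, ((⨆ i, (a i)⁻¹ * |Θ ω i| ^ α i) + 2*δ) ∂P
      = (∫ ω, (⨆ i, (a i)⁻¹ * |Θ ω i| ^ α i) ∂P) + 2*δ := by
    rw [integral_add hGint hconstint, integral_const]
    simp [measure_univ]
  have hEminus : ∫ ω, ((⨆ i, (a i)⁻¹ * |Θ ω i| ^ α i) - 2*δ) ∂P
      = (∫ ω, (⨆ i, (a i)⁻¹ * |Θ ω i| ^ α i) ∂P) - 2*δ := by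
    rw [integral_sub hGint hconstint, integral_const]
    simp [measure_univ]
  have hUpLim : ∑ k ∈ Finset.range (n+1), (((c/2 + (k:ℝ)*δ + δ) * a₀) * ∫ ω, hat ((((⨆ i, (a i)⁻¹ * |Θ ω i| ^ α i)) - c/2)/δ - (k:ℝ)) ∂P)
      ≤ a₀ * (∫ ω, (⨆ i, (a i)⁻¹ * |Θ ω i| ^ α i) ∂P) + 2*a₀*δ := by
    have h1 : ∑ k ∈ Finset.range (n+1), (((c/2 + (k:ℝ)*δ + δ) * a₀) * ∫ ω, hat ((((⨆ i, (a i)⁻¹ * |Θ ω i| ^ α i)) - c/2)/δ - (k:ℝ)) ∂P)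
        = a₀ * ∑ k ∈ Finset.range (n+1), (c/2 + (k:ℝ)*δ + δ) * ∫ ω, hat ((((⨆ i, (a i)⁻¹ * |Θ ω i| ^ α i)) - c/2)/δ - (k:ℝ)) ∂P := by
      rw [Finset.mul_sum]
      exact Finset.sum_congr rfl fun k _ => by ring
    rw [h1, hsum_int (fun k => c/2 + (k:ℝ)*δ + δ)]
    have h2 : ∫ ω, (∑ k ∈ Finset.range (n+1), (c/2 + (k:ℝ)*δ + δ) * hat ((((⨆ i, (a i)⁻¹ * |Θ ω i| ^ α i)) - c/2)/δ - (k:ℝ))) ∂P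
        ≤ ∫ ω, ((⨆ i, (a i)⁻¹ * |Θ ω i| ^ α i) + 2*δ) ∂P := by
      apply integral_mono_ae hsumint (hGint.add hconstint)
      filter_upwards [hΘfacts] with ω hω
      calc ∑ k ∈ Finset.range (n+1), (c/2 + (k:ℝ)*δ + δ) * hat ((((⨆ i, (a i)⁻¹ * |Θ ω i| ^ α i)) - c/2)/δ - (k:ℝ))
          ≤ ∑ k ∈ Finset.range (n+1), ((⨆ i, (a i)⁻¹ * |Θ ω i| ^ α i) + 2*δ) * hat ((((⨆ i, (a i)⁻¹ * |Θ ω i| ^ α i)) - c/2)/δ - (k:ℝ)) := by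
            apply Finset.sum_le_sum
            intro k _
            rcases eq_or_ne (hat ((((⨆ i, (a i)⁻¹ * |Θ ω i| ^ α i)) - c/2)/δ - (k:ℝ))) 0 with h0 | h0
            · rw [h0, mul_zero, mul_zero]
            · have h3 := abs_lt.mp (hψsupp k _ h0)
              exact mul_le_mul_of_nonneg_right (by linarith [h3.1]) (hat_nonneg _)
        _ = ((⨆ i, (a i)⁻¹ * |Θ ω i| ^ α i) + 2*δ) * ∑ k ∈ Finset.range (n+1), hat ((((⨆ i, (a i)⁻¹ * |Θ ω i| ^ α i)) - c/2)/δ - (k:ℝ)) := by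
            rw [Finset.mul_sum]
        _ = (⨆ i, (a i)⁻¹ * |Θ ω i| ^ α i) + 2*δ := by
            rw [hψsum _ hω.2.1 hω.2.2, mul_one]
    rw [hEplus] at h2
    calc a₀ * ∫ ω, (∑ k ∈ Finset.range (n+1), (c/2 + (k:ℝ)*δ + δ) * hat ((((⨆ i, (a i)⁻¹ * |Θ ω i| ^ α i)) - c/2)/δ - (k:ℝ))) ∂P
        ≤ a₀ * ((∫ ω, (⨆ i, (a i)⁻¹ * |Θ ω i| ^ α i) ∂P) + 2*δ) := mul_le_mul_of_nonneg_left h2 ha₀.le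
      _ = a₀ * (∫ ω, (⨆ i, (a i)⁻¹ * |Θ ω i| ^ α i) ∂P) + 2*a₀*δ := by ring
  have hLoLim : a₀ * (∫ ω, (⨆ i, (a i)⁻¹ * |Θ ω i| ^ α i) ∂P) - 2*a₀*δ
      ≤ ∑ k ∈ Finset.range (n+1), (((c/2 + (k:ℝ)*δ - δ) * a₀) * ∫ ω, hat ((((⨆ i, (a i)⁻¹ * |Θ ω i| ^ α i)) - c/2)/δ - (k:ℝ)) ∂P) := by
    have h1 : ∑ k ∈ Finset.range (n+1), (((c/2 + (k:ℝ)*δ - δ) * a₀) * ∫ ω, hat ((((⨆ i, (a i)⁻¹ * |Θ ω i| ^ α i)) - c/2)/δ - (k:ℝ)) ∂P)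
        = a₀ * ∑ k ∈ Finset.range (n+1), (c/2 + (k:ℝ)*δ - δ) * ∫ ω, hat ((((⨆ i, (a i)⁻¹ * |Θ ω i| ^ α i)) - c/2)/δ - (k:ℝ)) ∂P := by
      rw [Finset.mul_sum]
      exact Finset.sum_congr rfl fun k _ => by ring
    rw [h1, hsum_int (fun k => c/2 + (k:ℝ)*δ - δ)]
    have h2 : ∫ ω, ((⨆ i, (a i)⁻¹ * |Θ ω i| ^ α i) - 2*δ) ∂P
        ≤ ∫ ω, (∑ k ∈ Finset.range (n+1), (c/2 + (k:ℝ)*δ - δ) * hat ((((⨆ i, (a i)⁻¹ * |Θ ω i| ^ α i)) - c/2)/δ - (k:ℝ))) ∂P := by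
      apply integral_mono_ae (hGint.sub hconstint) hsumint'
      filter_upwards [hΘfacts] with ω hω
      calc (⨆ i, (a i)⁻¹ * |Θ ω i| ^ α i) - 2*δ
          = ((⨆ i, (a i)⁻¹ * |Θ ω i| ^ α i) - 2*δ) * ∑ k ∈ Finset.range (n+1), hat ((((⨆ i, (a i)⁻¹ * |Θ ω i| ^ α i)) - c/2)/δ - (k:ℝ)) := by
            rw [hψsum _ hω.2.1 hω.2.2, mul_one]
        _ = ∑ k ∈ Finset.range (n+1), ((⨆ i, (a i)⁻¹ * |Θ ω i| ^ α i) - 2*δ) * hat ((((⨆ i, (a i)⁻¹ * |Θ ω i| ^ α i)) - c/2)/δ - (k:ℝ)) := by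
            rw [Finset.mul_sum]
        _ ≤ ∑ k ∈ Finset.range (n+1), (c/2 + (k:ℝ)*δ - δ) * hat ((((⨆ i, (a i)⁻¹ * |Θ ω i| ^ α i)) - c/2)/δ - (k:ℝ)) := by
            apply Finset.sum_le_sum
            intro k _
            rcases eq_or_ne (hat ((((⨆ i, (a i)⁻¹ * |Θ ω i| ^ α i)) - c/2)/δ - (k:ℝ))) 0 with h0 | h0
            · rw [h0, mul_zero, mul_zero]
            · have h3 := abs_lt.mp (hψsupp k _ h0)
              exact mul_le_mul_of_nonneg_right (by linarith [h3.2]) (hat_nonneg _)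
    rw [hEminus] at h2
    calc a₀ * (∫ ω, (⨆ i, (a i)⁻¹ * |Θ ω i| ^ α i) ∂P) - 2*a₀*δ
        = a₀ * ((∫ ω, (⨆ i, (a i)⁻¹ * |Θ ω i| ^ α i) ∂P) - 2*δ) := by ring
      _ ≤ a₀ * ∫ ω, (∑ k ∈ Finset.range (n+1), (c/2 + (k:ℝ)*δ - δ) * hat ((((⨆ i, (a i)⁻¹ * |Θ ω i| ^ α i)) - c/2)/δ - (k:ℝ))) ∂P :=
          mul_le_mul_of_nonneg_left h2 ha₀.le
  -- the sandwich
  have hsand : ∀ᶠ x : ℝ in atTop,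
      (∑ k ∈ Finset.range (n+1), x * ∫ ω, Set.indicator {ω | (⨆ i, |X ω i| ^ α i) > x / (c/2 + (k:ℝ)*δ - δ)} (fun ω => hat (((((⨆ i, |X ω i| ^ α i)⁻¹ * ⨆ i, (a i)⁻¹ * |X ω i| ^ α i)) - c/2)/δ - (k:ℝ))) ω ∂P) ≤ x * (P {ω | (⨆ i, (a i)⁻¹ * |X ω i| ^ α i) > x}).toReal ∧ x * (P {ω | (⨆ i, (a i)⁻¹ * |X ω i| ^ α i) > x}).toReal ≤ (∑ k ∈ Finset.range (n+1), x * ∫ ω, Set.indicator {ω | (⨆ i, |X ω i| ^ α i) > x / (c/2 + (k:ℝ)*δ + δ)} (fun ω => hat (((((⨆ i, |X ω i| ^ α i)⁻¹ * ⨆ i, (a i)⁻¹ * |X ω i| ^ α i)) - c/2)/δ - (k:ℝ))) ω ∂P) := by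
    filter_upwards [eventually_gt_atTop (0:ℝ)] with x hx
    have hAmeas : MeasurableSet {ω | (⨆ i, (a i)⁻¹ * |X ω i| ^ α i) > x} :=
      measurableSet_lt measurable_const hTmeas
    have hdecomp : x * (P {ω | (⨆ i, (a i)⁻¹ * |X ω i| ^ α i) > x}).toReal = ∑ k ∈ Finset.range (n+1),
        x * ∫ ω, Set.indicator {ω | (⨆ i, (a i)⁻¹ * |X ω i| ^ α i) > x} (fun ω => hat (((((⨆ i, |X ω i| ^ α i)⁻¹ * ⨆ i, (a i)⁻¹ * |X ω i| ^ α i)) - c/2)/δ - (k:ℝ))) ω ∂P := by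
      have e1 : ∫ ω, Set.indicator {ω | (⨆ i, (a i)⁻¹ * |X ω i| ^ α i) > x} (fun _ => (1:ℝ)) ω ∂P
          = (P {ω | (⨆ i, (a i)⁻¹ * |X ω i| ^ α i) > x}).toReal := by
        rw [integral_indicator_const (1:ℝ) hAmeas, smul_eq_mul, mul_one]
        rfl
      rw [← e1]
      have e2 : ∫ ω, Set.indicator {ω | (⨆ i, (a i)⁻¹ * |X ω i| ^ α i) > x} (fun _ => (1:ℝ)) ω ∂P
          = ∫ ω, (∑ k ∈ Finset.range (n+1),
              Set.indicator {ω | (⨆ i, (a i)⁻¹ * |X ω i| ^ α i) > x} (fun ω => hat (((((⨆ i, |X ω i| ^ α i)⁻¹ * ⨆ i, (a i)⁻¹ * |X ω i| ^ α i)) - c/2)/δ - (k:ℝ))) ω) ∂P := by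
        apply integral_congr_ae
        filter_upwards [hae_core] with ω hω
        by_cases hmem : ω ∈ {ω | (⨆ i, (a i)⁻¹ * |X ω i| ^ α i) > x}
        · rw [Set.indicator_of_mem hmem]
          rw [Finset.sum_congr rfl fun k _ => Set.indicator_of_mem hmem _]
          have hRpos := hω.2.1
          have hc1 : c ≤ ((⨆ i, |X ω i| ^ α i)⁻¹ * ⨆ i, (a i)⁻¹ * |X ω i| ^ α i) := by
            rw [inv_mul_eq_div, le_div_iff₀ hRpos]
            exact hω.2.2.1
          have hC1 : ((⨆ i, |X ω i| ^ α i)⁻¹ * ⨆ i, (a i)⁻¹ * |X ω i| ^ α i) ≤ C := by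
            rw [inv_mul_eq_div, div_le_iff₀ hRpos]
            exact hω.2.2.2
          exact (hψsum _ hc1 hC1).symm
        · rw [Set.indicator_of_notMem hmem]
          rw [Finset.sum_congr rfl fun k _ => Set.indicator_of_notMem hmem _]
          simp
      rw [e2, integral_finset_sum _ (fun k _ => (hψSXint k).indicator hAmeas), Finset.mul_sum]
    constructor
    · rw [hdecomp]
      apply Finset.sum_le_sum
      intro k _
      apply mul_le_mul_of_nonneg_left _ hx.le
      apply integral_mono_ae
        ((hψSXint k).indicator (measurableSet_lt measurable_const hRmeas))
        ((hψSXint k).indicator hAmeas)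
      filter_upwards [hae_core] with ω hω
      refine indicator_le_indicator_pt ω ?_ ?_
      · exact hat_nonneg _
      intro hmemB hne
      have hRpos := hω.2.1
      have hskpos : (0:ℝ) < c/2 + (k:ℝ)*δ - δ := by
        have : (0:ℝ) ≤ (k:ℝ)*δ := by positivity
        linarith
      have h5 := (abs_lt.mp (hψsupp k _ hne)).1
      have hRgt : x / (c/2 + (k:ℝ)*δ - δ) < (⨆ i, |X ω i| ^ α i) := hmemB
      have h6 : x < (⨆ i, |X ω i| ^ α i) * (c/2 + (k:ℝ)*δ - δ) := (div_lt_iff₀ hskpos).mp hRgt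
      show x < (⨆ i, (a i)⁻¹ * |X ω i| ^ α i)
      have h7 : (⨆ i, |X ω i| ^ α i) * (c/2 + (k:ℝ)*δ - δ) ≤ (⨆ i, |X ω i| ^ α i) * ((⨆ i, |X ω i| ^ α i)⁻¹ * ⨆ i, (a i)⁻¹ * |X ω i| ^ α i) :=
        mul_le_mul_of_nonneg_left (by linarith) hRpos.le
      have h8 : (⨆ i, |X ω i| ^ α i) * ((⨆ i, |X ω i| ^ α i)⁻¹ * ⨆ i, (a i)⁻¹ * |X ω i| ^ α i) = (⨆ i, (a i)⁻¹ * |X ω i| ^ α i) := by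
        rw [← mul_assoc, mul_inv_cancel₀ hRpos.ne', one_mul]
      linarith
    · rw [hdecomp]
      apply Finset.sum_le_sum
      intro k _
      apply mul_le_mul_of_nonneg_left _ hx.le
      apply integral_mono_ae
        ((hψSXint k).indicator hAmeas)
        ((hψSXint k).indicator (measurableSet_lt measurable_const hRmeas))
      filter_upwards [hae_core] with ω hω
      refine indicator_le_indicator_pt ω ?_ ?_
      · exact hat_nonneg _
      intro hmemA hne
      have hRpos := hω.2.1
      have hskpos : (0:ℝ) < c/2 + (k:ℝ)*δ + δ := by positivity
      have h5 := (abs_lt.mp (hψsupp k _ hne)).2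
      have hTgt : x < (⨆ i, (a i)⁻¹ * |X ω i| ^ α i) := hmemA
      have h8 : (⨆ i, |X ω i| ^ α i) * ((⨆ i, |X ω i| ^ α i)⁻¹ * ⨆ i, (a i)⁻¹ * |X ω i| ^ α i) = (⨆ i, (a i)⁻¹ * |X ω i| ^ α i) := by
        rw [← mul_assoc, mul_inv_cancel₀ hRpos.ne', one_mul]
      show x / (c/2 + (k:ℝ)*δ + δ) < (⨆ i, |X ω i| ^ α i)
      rw [div_lt_iff₀ hskpos]
      have h7 : (⨆ i, |X ω i| ^ α i) * ((⨆ i, |X ω i| ^ α i)⁻¹ * ⨆ i, (a i)⁻¹ * |X ω i| ^ α i) ≤ (⨆ i, |X ω i| ^ α i) * (c/2 + (k:ℝ)*δ + δ) :=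
        mul_le_mul_of_nonneg_left (by linarith) hRpos.le
      linarith
  -- conclusion
  have hub := hUp.eventually_lt_const
    (lt_of_le_of_lt hUpLim (by linarith : a₀ * (∫ ω, (⨆ i, (a i)⁻¹ * |Θ ω i| ^ α i) ∂P) + 2*a₀*δ
      < a₀ * (∫ ω, (⨆ i, (a i)⁻¹ * |Θ ω i| ^ α i) ∂P) + 2*a₀*δ + ε/8))
  have hlb := hLo.eventually_const_lt
    (lt_of_lt_of_le (by linarith : a₀ * (∫ ω, (⨆ i, (a i)⁻¹ * |Θ ω i| ^ α i) ∂P) - 2*a₀*δ - ε/8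
      < a₀ * (∫ ω, (⨆ i, (a i)⁻¹ * |Θ ω i| ^ α i) ∂P) - 2*a₀*δ) hLoLim)
  filter_upwards [hsand, hub, hlb] with x hx hub' hlb'
  rw [Real.dist_eq, abs_sub_lt_iff]
  have hm1 := lt_of_le_of_lt hx.2 hub'
  have hm2 := lt_of_lt_of_le hlb' hx.1
  constructor
  · linarith
  · linarith
end

section
/- Under the stated assumptions, the topological support of the law of the spectral component Θ̃₀ is contained in span(supp(Q₁)) ∩ S^{d-1}_∞, where span denotes linear span and S^{d-1}_∞ the max-norm unit sphere. -/
open MeasureTheory ProbabilityTheory Filter BoundedContinuousFunction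

/-- The topological support of a measure: the smallest closed set carrying full measure,
formalized as the intersection of all closed sets whose complement is null. -/
def measureSupport {E : Type*} [TopologicalSpace E] [MeasurableSpace E]
    (μ : Measure E) : Set E :=
  ⋂₀ {s : Set E | IsClosed s ∧ μ sᶜ = 0}

lemma isClosed_measureSupport {E : Type*} [TopologicalSpace E] [MeasurableSpace E]
    (μ : Measure E) : IsClosed (measureSupport μ) :=
  isClosed_sInter fun _ hs => hs.1

lemma measure_compl_measureSupport {E : Type*} [TopologicalSpace E]
    [SecondCountableTopology E] [MeasurableSpace E] (μ : Measure E) :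
    μ (measureSupport μ)ᶜ = 0 := by
  have h : (measureSupport μ)ᶜ = ⋃₀ {u : Set E | IsOpen u ∧ μ u = 0} := by
    ext x
    simp only [measureSupport, Set.mem_compl_iff, Set.mem_sInter, Set.mem_sUnion,
      Set.mem_setOf_eq, not_forall]
    constructor
    · rintro ⟨s, ⟨hs, hns⟩, hx⟩
      exact ⟨sᶜ, ⟨hs.isOpen_compl, hns⟩, hx⟩
    · rintro ⟨u, ⟨hu, hnu⟩, hx⟩
      exact ⟨uᶜ, ⟨⟨isClosed_compl_iff.2 hu, by simpa using hnu⟩, by simpa using hx⟩⟩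
  rw [h]
  obtain ⟨T, hTc, hTsub, hTU⟩ :=
    TopologicalSpace.isOpen_sUnion_countable {u : Set E | IsOpen u ∧ μ u = 0}
      (fun u (hu : IsOpen u ∧ μ u = 0) => hu.1)
  rw [← hTU]
  exact (measure_sUnion_null_iff hTc).2 fun s hs => (hTsub hs).2

/-- The support of the law of the spectral component `Θ̃₀` is contained in
`span(supp(Q₁)) ∩ S^{d-1}_∞`. -/
theorem spectral_support_subset_span
    {Ω : Type*} [MeasurableSpace Ω] (P : Measure Ω) [IsProbabilityMeasure P]
    (d : ℕ) [NeZero d]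
    (M : ℕ → Ω → ℝ) (Q : ℕ → Ω → Fin d → ℝ)
    (hM_meas : ∀ t, Measurable (M t)) (hQ_meas : ∀ t, Measurable (Q t))
    (hM_indep : iIndepFun M P)
    (hM_ident : ∀ t, IdentDistrib (M t) (M 0) P P)
    (hQ_indep : iIndepFun Q P)
    (hQ_ident : ∀ t, IdentDistrib (Q t) (Q 0) P P)
    (hMQ_indep : IndepFun (fun ω t => M t ω) (fun ω t => Q t ω) P)
    (b c : ℝ) (hb : 0 ≤ b) (hc : 0 < c)
    (hA1 : ∫ ω, Real.log |b + c * M 0 ω| ∂P < 0)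
    (α : ℝ) (hα : 0 < α) (hA2 : ∫ ω, |b + c * M 0 ω| ^ α ∂P = 1)
    (hA3 : ∃ ε > 0, Integrable (fun ω => |M 0 ω| ^ (α + ε)) P ∧
        Integrable (fun ω => ‖Q 0 ω‖ ^ (α + ε)) P)
    (hA4 : ∀ a : ℝ, 0 < a →
        ¬ (∀ᵐ ω ∂P, ∃ n : ℤ, Real.log |b + c * M 0 ω| = a * n))
    (hA5 : ∀ i : Fin d, (∀ x : ℝ, P {ω | (b + c * M 0 ω) * x + Q 0 ω i = x} < 1) ∧
        0 < P {ω | 0 < Q 0 ω i})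
    -- the stationary solution
    (X : Ω → Fin d → ℝ)
    (hX : ∀ ω i, X ω i =
      ∑' k : ℕ, (∏ l ∈ Finset.range k, (b + c * M l ω)) * Q k ω i)
    -- regular variation of the max-norm
    (a : ℝ) (ha : 0 < a)
    (htail : Tendsto (fun x : ℝ => x ^ α * (P {ω | ‖X ω‖ > x}).toReal) atTop (nhds a))
    -- the spectral component
    (Θ : Ω → Fin d → ℝ) (hΘ_meas : Measurable Θ)
    (hΘ_sphere : ∀ᵐ ω ∂P, ‖Θ ω‖ = 1)
    (hweak : ∀ f : (Fin d → ℝ) →ᵇ ℝ,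
      Tendsto (fun x : ℝ =>
          ∫ ω, f (fun i => ‖X ω‖⁻¹ * X ω i) ∂(P[|{ω | ‖X ω‖ > x}]))
        atTop (nhds (∫ ω, f (Θ ω) ∂P))) :
    measureSupport (Measure.map Θ P) ⊆
      ↑(Submodule.span ℝ (measureSupport (Measure.map (Q 0) P))) ∩
        {x : Fin d → ℝ | ‖x‖ = 1} := by
  obtain ⟨ε, hε, hMint, hQint⟩ := hA3
  set S : Set (Fin d → ℝ) := measureSupport (Measure.map (Q 0) P) with hSdef
  set V : Submodule ℝ (Fin d → ℝ) := Submodule.span ℝ S with hVdef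
  have hVclosed : IsClosed (V : Set (Fin d → ℝ)) := Submodule.closed_of_finiteDimensional V
  have hSclosed : IsClosed S := isClosed_measureSupport _
  -- a.e., every Q k lands in S
  have hQmem : ∀ᵐ ω ∂P, ∀ k, Q k ω ∈ S := by
    rw [ae_all_iff]
    intro k
    have h0 : Measure.map (Q k) P = Measure.map (Q 0) P := (hQ_ident k).map_eq
    have hnull : (Measure.map (Q k) P) Sᶜ = 0 := by
      rw [h0]; exact measure_compl_measureSupport _
    have hae : ∀ᵐ x ∂(Measure.map (Q k) P), x ∈ S := by
      rw [ae_iff]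
      exact hnull
    exact (ae_map_iff (hQ_meas k).aemeasurable hSclosed.measurableSet).mp hae
  -- SLLN for the logs
  have hg : Measurable (fun x : ℝ => Real.log |b + c * x|) :=
    Real.measurable_log.comp (measurable_const.add (measurable_const.mul measurable_id)).abs
  have hYint : Integrable (fun ω => Real.log |b + c * M 0 ω|) P := by
    by_contra h
    rw [integral_undef h] at hA1
    exact lt_irrefl 0 hA1
  set m : ℝ := ∫ ω, Real.log |b + c * M 0 ω| ∂P with hmdef
  have hm : m < 0 := hA1
  have hslln : ∀ᵐ ω ∂P, Tendsto
      (fun n : ℕ => (∑ l ∈ Finset.range n, Real.log |b + c * M l ω|) / n) atTop (nhds m) := by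
    refine strong_law_ae_real (fun l ω => Real.log |b + c * M l ω|) hYint ?_ ?_
    · intro i j hij
      exact ((hM_indep.indepFun hij).comp hg hg)
    · intro i
      exact (hM_ident i).comp hg
  -- Borel–Cantelli for the norms of Q
  set δ : ℝ := -m / 4 with hδdef
  have hδ : 0 < δ := by simp only [hδdef]; linarith
  have hαε : 0 < α + ε := by linarith
  set I : ℝ := ∫ ω, ‖Q 0 ω‖ ^ (α + ε) ∂P with hIdef
  set s : ℕ → Set Ω := fun k => {ω | Real.exp (δ * k) ≤ ‖Q k ω‖} with hsdef
  have hsk : ∀ k : ℕ, P (s k) ≤ ENNReal.ofReal (I * Real.exp (-(δ * (α + ε))) ^ k) := by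
    intro k
    have hid : P (s k) = P {ω | Real.exp (δ * k) ≤ ‖Q 0 ω‖} := by
      have h := ((hQ_ident k).comp measurable_norm).measure_mem_eq
        (measurableSet_Ici (a := Real.exp (δ * k)))
      simpa [hsdef, Set.preimage, Set.mem_Ici] using h
    have hsub : {ω | Real.exp (δ * k) ≤ ‖Q 0 ω‖} ⊆
        {ω | Real.exp (δ * (α + ε) * k) ≤ ‖Q 0 ω‖ ^ (α + ε)} := by
      intro ω hω
      have h1 : (Real.exp (δ * k)) ^ (α + ε) ≤ ‖Q 0 ω‖ ^ (α + ε) :=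
        Real.rpow_le_rpow (Real.exp_pos _).le hω hαε.le
      have h2 : (Real.exp (δ * k)) ^ (α + ε) = Real.exp (δ * (α + ε) * k) := by
        rw [Real.rpow_def_of_pos (Real.exp_pos _), Real.log_exp]
        congr 1; ring
      simpa [h2] using h1
    have hmar := mul_meas_ge_le_integral_of_nonneg
      (ae_of_all P (fun ω => Real.rpow_nonneg (norm_nonneg (Q 0 ω)) (α + ε))) hQint
      (Real.exp (δ * (α + ε) * k))
    have hfin : P {ω | Real.exp (δ * (α + ε) * k) ≤ ‖Q 0 ω‖ ^ (α + ε)} ≠ ⊤ :=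
      measure_ne_top _ _
    have hto : (P {ω | Real.exp (δ * (α + ε) * k) ≤ ‖Q 0 ω‖ ^ (α + ε)}).toReal ≤
        I * Real.exp (-(δ * (α + ε))) ^ k := by
      have hpos : 0 < Real.exp (δ * (α + ε) * k) := Real.exp_pos _
      have h3 : Real.exp (-(δ * (α + ε))) ^ k = (Real.exp (δ * (α + ε) * k))⁻¹ := by
        rw [← Real.exp_nat_mul, ← Real.exp_neg]
        congr 1; ring
      rw [h3, ← div_eq_mul_inv, le_div_iff₀ hpos, mul_comm]
      exact hmar
    calc P (s k) = P {ω | Real.exp (δ * k) ≤ ‖Q 0 ω‖} := hid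
      _ ≤ P {ω | Real.exp (δ * (α + ε) * k) ≤ ‖Q 0 ω‖ ^ (α + ε)} := measure_mono hsub
      _ = ENNReal.ofReal ((P {ω | Real.exp (δ * (α + ε) * k) ≤ ‖Q 0 ω‖ ^ (α + ε)}).toReal) :=
          (ENNReal.ofReal_toReal hfin).symm
      _ ≤ ENNReal.ofReal (I * Real.exp (-(δ * (α + ε))) ^ k) := ENNReal.ofReal_le_ofReal hto
  have hsum : ∑' k, P (s k) ≠ ⊤ := by
    have hr1 : Real.exp (-(δ * (α + ε))) < 1 := by
      rw [Real.exp_lt_one_iff]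
      have := mul_pos hδ hαε
      linarith
    have hsumr : Summable (fun k : ℕ => I * Real.exp (-(δ * (α + ε))) ^ k) :=
      (summable_geometric_of_lt_one (Real.exp_nonneg _) hr1).mul_left I
    have hIge : 0 ≤ I := integral_nonneg (fun ω => Real.rpow_nonneg (norm_nonneg _) _)
    have h4 := ENNReal.ofReal_tsum_of_nonneg
      (fun k => by positivity) hsumr
    refine ne_top_of_le_ne_top ?_ (ENNReal.tsum_le_tsum hsk)
    rw [← h4]
    exact ENNReal.ofReal_ne_top
  have hBC : ∀ᵐ ω ∂P, ∀ᶠ k : ℕ in atTop, ‖Q k ω‖ < Real.exp (δ * k) := by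
    filter_upwards [ae_eventually_notMem hsum] with ω hω
    refine hω.mono (fun k hk => ?_)
    simpa [hsdef, not_le] using hk
  -- almost every ω: X ω ∈ V
  have hXmem : ∀ᵐ ω ∂P, X ω ∈ (V : Set (Fin d → ℝ)) := by
    filter_upwards [hQmem, hslln, hBC] with ω hQS hT hE
    have hprod : ∀ k : ℕ, |∏ l ∈ Finset.range k, (b + c * M l ω)| ≤
        Real.exp (∑ l ∈ Finset.range k, Real.log |b + c * M l ω|) := by
      intro k
      rw [Finset.abs_prod, Real.exp_sum]
      refine Finset.prod_le_prod (fun l _ => abs_nonneg _) (fun l _ => ?_)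
      rcases eq_or_ne (b + c * M l ω) 0 with h | h
      · rw [h]; norm_num
      · exact le_of_eq (Real.exp_log (abs_pos.2 h)).symm
    have hsumB : ∀ᶠ k : ℕ in atTop,
        (∑ l ∈ Finset.range k, Real.log |b + c * M l ω|) ≤ (m / 2) * k := by
      have h1 : ∀ᶠ k : ℕ in atTop,
          (∑ l ∈ Finset.range k, Real.log |b + c * M l ω|) / k < m / 2 :=
        hT.eventually_lt_const (by linarith)
      filter_upwards [h1, eventually_ge_atTop 1] with k hk hk1
      have hkpos : (0:ℝ) < k := by exact_mod_cast hk1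
      have h2 := (div_lt_iff₀ hkpos).1 hk
      linarith
    have hrho1 : Real.exp (m / 4) < 1 := by rw [Real.exp_lt_one_iff]; linarith
    have hterm : ∀ᶠ k : ℕ in atTop,
        |∏ l ∈ Finset.range k, (b + c * M l ω)| * ‖Q k ω‖ ≤ Real.exp (m / 4) ^ k := by
      filter_upwards [hsumB, hE] with k hk1 hk2
      have h1 : |∏ l ∈ Finset.range k, (b + c * M l ω)| ≤ Real.exp ((m / 2) * k) :=
        le_trans (hprod k) (Real.exp_le_exp.2 hk1)
      have h3 : |∏ l ∈ Finset.range k, (b + c * M l ω)| * ‖Q k ω‖ ≤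
          Real.exp ((m / 2) * k) * Real.exp (δ * k) :=
        mul_le_mul h1 hk2.le (norm_nonneg _) (Real.exp_nonneg _)
      refine h3.trans (le_of_eq ?_)
      rw [← Real.exp_add, ← Real.exp_nat_mul]
      congr 1
      simp only [hδdef]
      ring
    obtain ⟨N, hN⟩ := eventually_atTop.1 hterm
    have htsum : Summable (fun k : ℕ =>
        |∏ l ∈ Finset.range k, (b + c * M l ω)| * ‖Q k ω‖) := by
      rw [← summable_nat_add_iff N]
      refine Summable.of_nonneg_of_le
        (fun k => mul_nonneg (abs_nonneg _) (norm_nonneg _))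
        (fun k => hN (k + N) (Nat.le_add_left N k)) ?_
      have hgeo := (summable_geometric_of_lt_one (Real.exp_nonneg (m / 4)) hrho1).mul_left
        (Real.exp (m / 4) ^ N)
      refine hgeo.congr (fun k => ?_)
      rw [pow_add]; ring
    have hcomp : ∀ i, Summable (fun k : ℕ =>
        (∏ l ∈ Finset.range k, (b + c * M l ω)) * Q k ω i) := by
      intro i
      refine Summable.of_abs (Summable.of_nonneg_of_le (fun k => abs_nonneg _)
        (fun k => ?_) htsum)
      rw [abs_mul]
      refine mul_le_mul_of_nonneg_left ?_ (abs_nonneg _)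
      simpa [Real.norm_eq_abs] using norm_le_pi_norm (Q k ω) i
    have hhs : HasSum (fun k : ℕ =>
        (∏ l ∈ Finset.range k, (b + c * M l ω)) • Q k ω) (X ω) := by
      refine Pi.hasSum.2 (fun i => ?_)
      have h5 := (hcomp i).hasSum
      have h6 : X ω i = ∑' k : ℕ, (∏ l ∈ Finset.range k, (b + c * M l ω)) * Q k ω i :=
        hX ω i
      rw [h6]
      simpa only [Pi.smul_apply, smul_eq_mul] using h5
    refine hVclosed.mem_of_tendsto hhs (Eventually.of_forall (fun sfin => ?_))
    exact Submodule.sum_mem V (fun k _ => V.smul_mem _ (Submodule.subset_span (hQS k)))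
  -- transfer to Θ
  have hΘmem : ∀ᵐ ω ∂P, Θ ω ∈ (V : Set (Fin d → ℝ)) := by
    have hVne : (V : Set (Fin d → ℝ)).Nonempty := ⟨0, V.zero_mem⟩
    set f : (Fin d → ℝ) →ᵇ ℝ :=
      BoundedContinuousFunction.mkOfBound
        ⟨fun x => min (Metric.infDist x (V : Set (Fin d → ℝ))) 1,
          (Metric.continuous_infDist_pt _).min continuous_const⟩ 1
        (fun x y => by
          rw [Real.dist_eq]
          have h1x : (0:ℝ) ≤ min (Metric.infDist x (V : Set (Fin d → ℝ))) 1 :=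
            le_min Metric.infDist_nonneg zero_le_one
          have h1y : (0:ℝ) ≤ min (Metric.infDist y (V : Set (Fin d → ℝ))) 1 :=
            le_min Metric.infDist_nonneg zero_le_one
          have h2x : min (Metric.infDist x (V : Set (Fin d → ℝ))) 1 ≤ 1 := min_le_right _ _
          have h2y : min (Metric.infDist y (V : Set (Fin d → ℝ))) 1 ≤ 1 := min_le_right _ _
          rw [abs_sub_le_iff]
          constructor <;> dsimp only [ContinuousMap.coe_mk] <;> linarith) with hfdef
    have hfval : ∀ z : Fin d → ℝ, f z = min (Metric.infDist z (V : Set (Fin d → ℝ))) 1 :=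
      fun z => rfl
    have hzero : ∀ x : ℝ,
        (∫ ω, f (fun i => ‖X ω‖⁻¹ * X ω i) ∂(P[|{ω | ‖X ω‖ > x}])) = 0 := by
      intro x
      have haeP : ∀ᵐ ω ∂P, f (fun i => ‖X ω‖⁻¹ * X ω i) = 0 := by
        filter_upwards [hXmem] with ω hω
        have hmem : (fun i => ‖X ω‖⁻¹ * X ω i) ∈ (V : Set (Fin d → ℝ)) :=
          V.smul_mem ‖X ω‖⁻¹ hω
        rw [hfval, Metric.infDist_zero_of_mem hmem]
        simp
      have hcond : ∀ᵐ ω ∂(P[|{ω | ‖X ω‖ > x}]), f (fun i => ‖X ω‖⁻¹ * X ω i) = 0 :=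
        haeP.filter_mono cond_absolutelyContinuous.ae_le
      exact integral_eq_zero_of_ae hcond
    have hlim0 : Tendsto (fun x : ℝ =>
        ∫ ω, f (fun i => ‖X ω‖⁻¹ * X ω i) ∂(P[|{ω | ‖X ω‖ > x}])) atTop (nhds 0) := by
      simp only [hzero]
      exact tendsto_const_nhds
    have hintf : ∫ ω, f (Θ ω) ∂P = 0 := tendsto_nhds_unique (hweak f) hlim0
    have hint : Integrable (fun ω => f (Θ ω)) P := by
      refine Integrable.mono' (integrable_const ‖f‖)
        ((f.continuous.measurable.comp hΘ_meas).aestronglyMeasurable) ?_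
      exact Eventually.of_forall (fun ω => f.norm_coe_le_norm _)
    have hnonneg : 0 ≤ᵐ[P] fun ω => f (Θ ω) :=
      ae_of_all _ (fun ω => le_min Metric.infDist_nonneg zero_le_one)
    have hae0 : (fun ω => f (Θ ω)) =ᵐ[P] 0 :=
      (integral_eq_zero_iff_of_nonneg_ae hnonneg hint).1 hintf
    filter_upwards [hae0] with ω hω
    have h7 : min (Metric.infDist (Θ ω) (V : Set (Fin d → ℝ))) 1 = 0 := hω
    have hd0 : Metric.infDist (Θ ω) (V : Set (Fin d → ℝ)) = 0 := by
      rcases min_eq_iff.1 h7 with h | h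
      · exact h.1
      · exact absurd h.1 one_ne_zero
    exact (hVclosed.mem_iff_infDist_zero hVne).2 hd0
  -- conclusion
  intro z hz
  constructor
  · refine hz (V : Set (Fin d → ℝ)) ⟨hVclosed, ?_⟩
    rw [Measure.map_apply hΘ_meas hVclosed.measurableSet.compl]
    exact ae_iff.1 hΘmem
  · refine hz {x : Fin d → ℝ | ‖x‖ = 1} ⟨isClosed_eq continuous_norm continuous_const, ?_⟩
    rw [Measure.map_apply hΘ_meas (isClosed_eq continuous_norm continuous_const).measurableSet.compl]
    exact ae_iff.1 hΘ_sphere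
end

section
/- Let Z be a standard Gaussian random variable, and let b ≥ 0, c > 0 be constants such that E[log(b + cZ²)] < 0. Then there exists a unique α > 0 such that E[(b + cZ²)^α] = 1. -/
open MeasureTheory ProbabilityTheory Filter

open Real Set Topology


lemma int_abs_rpow_exp {bb : ℝ} (hbb : 0 < bb) {p : ℝ} (hp : -1 < p) :
    Integrable (fun x : ℝ => |x| ^ p * Real.exp (-bb * x ^ 2)) := by
  have base := integrableOn_rpow_mul_exp_neg_mul_sq hbb hp
  have hmeas : Measurable (fun x : ℝ => |x| ^ p * Real.exp (-bb * x ^ 2)) := by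
    fun_prop
  have hIoi : IntegrableOn (fun x : ℝ => |x| ^ p * Real.exp (-bb * x ^ 2)) (Ioi 0) := by
    refine base.congr_fun (fun x hx => ?_) measurableSet_Ioi
    rw [abs_of_pos hx]
  have hIci : IntegrableOn (fun x : ℝ => |x| ^ p * Real.exp (-bb * x ^ 2)) (Ici 0) := by
    rwa [integrableOn_Ici_iff_integrableOn_Ioi]
  have hIio : IntegrableOn (fun x : ℝ => |x| ^ p * Real.exp (-bb * x ^ 2)) (Iio 0) := by
    rw [← (Measure.measurePreserving_neg (volume : Measure ℝ)).integrableOn_comp_preimage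
        (Homeomorph.neg ℝ).measurableEmbedding]
    simpa [Function.comp_def, abs_neg, neg_Iio] using hIoi
  rw [← integrableOn_univ, ← Iio_union_Ici (a := (0:ℝ)), integrableOn_union]
  exact ⟨hIio, hIci⟩

lemma gauss_moment {p : ℝ} (hp : -1 < p) :
    Integrable (fun x : ℝ => |x| ^ p) (gaussianReal 0 1) := by
  rw [gaussianReal_of_var_ne_zero 0 one_ne_zero,
    integrable_withDensity_iff (measurable_gaussianPDF 0 1)
      (ae_of_all _ fun x => ENNReal.ofReal_lt_top)]
  have : (fun x : ℝ => |x| ^ p * (gaussianPDF 0 1 x).toReal)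
      = fun x => (√(2 * π))⁻¹ * (|x| ^ p * Real.exp (-(2:ℝ)⁻¹ * x ^ 2)) := by
    funext x
    rw [gaussianPDF, ENNReal.toReal_ofReal (gaussianPDFReal_nonneg _ _ _), gaussianPDFReal]
    push_cast
    ring_nf
  rw [this]
  exact (int_abs_rpow_exp (by norm_num) hp).const_mul _


lemma key_bound {b c : ℝ} (hb : 0 ≤ b) (hc : 0 < c) {M α : ℝ} (h0 : 0 ≤ α) (hM : α ≤ M)
    (z : ℝ) :
    (b + c * z ^ 2) ^ α ≤ (1 + (b + c) ^ M) * (2 ^ (2 * M) * (2 + |z| ^ (2 * M))) := by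
  have hz2 : (0:ℝ) ≤ z ^ 2 := sq_nonneg z
  have hx : 0 ≤ b + c * z ^ 2 := by positivity
  have hbc : 0 < b + c := by linarith
  have hM0 : 0 ≤ M := le_trans h0 hM
  have habs : (0:ℝ) ≤ |z| := abs_nonneg z
  have l1 : (b + c * z ^ 2) ^ α ≤ (b + c) ^ α * (1 + z ^ 2) ^ α := by
    rw [← Real.mul_rpow hbc.le (by positivity)]
    exact Real.rpow_le_rpow hx (by nlinarith) h0
  have l2 : (b + c) ^ α ≤ 1 + (b + c) ^ M := by
    have hnn : (0:ℝ) ≤ (b + c) ^ M := Real.rpow_nonneg hbc.le M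
    rcases le_total (b + c) 1 with h | h
    · linarith [Real.rpow_le_one hbc.le h h0]
    · linarith [Real.rpow_le_rpow_of_exponent_le h hM]
  have l3 : (1 + z ^ 2) ^ α ≤ 2 ^ (2 * M) * (2 + |z| ^ (2 * M)) := by
    have e2 : ((1:ℝ) + z ^ 2) ^ α ≤ (1 + z ^ 2) ^ M :=
      Real.rpow_le_rpow_of_exponent_le (by nlinarith) hM
    have e3 : ((1:ℝ) + z ^ 2) ^ M ≤ ((1 + |z|) ^ 2) ^ M := by
      refine Real.rpow_le_rpow (by positivity) ?_ hM0
      nlinarith [sq_abs z]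
    have e4 : (((1:ℝ) + |z|) ^ 2) ^ M = (1 + |z|) ^ (2 * M) := by
      rw [← Real.rpow_natCast (1 + |z|) 2, ← Real.rpow_mul (by positivity)]
      norm_num
    have e5 : ((1:ℝ) + |z|) ^ (2 * M) ≤ (2 * max 1 |z|) ^ (2 * M) := by
      refine Real.rpow_le_rpow (by positivity) ?_ (by positivity)
      have := le_max_left (1:ℝ) |z|
      have := le_max_right (1:ℝ) |z|
      linarith
    have e6 : ((2:ℝ) * max 1 |z|) ^ (2 * M) = 2 ^ (2 * M) * (max 1 |z|) ^ (2 * M) :=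
      Real.mul_rpow (by norm_num) (by positivity)
    have e7 : (max (1:ℝ) |z|) ^ (2 * M) ≤ 2 + |z| ^ (2 * M) := by
      have hnn : (0:ℝ) ≤ |z| ^ (2 * M) := Real.rpow_nonneg habs _
      rcases le_total |z| 1 with h | h
      · rw [max_eq_left h, Real.one_rpow]; linarith
      · rw [max_eq_right h]; linarith
    calc ((1:ℝ) + z ^ 2) ^ α ≤ ((1 + |z|) ^ 2) ^ M := le_trans e2 e3
      _ = (1 + |z|) ^ (2 * M) := e4
      _ ≤ (2 * max 1 |z|) ^ (2 * M) := e5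
      _ = 2 ^ (2 * M) * (max 1 |z|) ^ (2 * M) := e6
      _ ≤ 2 ^ (2 * M) * (2 + |z| ^ (2 * M)) := by
          have : (0:ℝ) ≤ (2:ℝ) ^ (2 * M) := Real.rpow_nonneg (by norm_num) _
          exact mul_le_mul_of_nonneg_left e7 this
  calc (b + c * z ^ 2) ^ α ≤ (b + c) ^ α * (1 + z ^ 2) ^ α := l1
    _ ≤ (1 + (b + c) ^ M) * (2 ^ (2 * M) * (2 + |z| ^ (2 * M))) := by
        refine mul_le_mul l2 l3 (Real.rpow_nonneg (by positivity) _) ?_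
        have hnn : (0:ℝ) ≤ (b + c) ^ M := Real.rpow_nonneg hbc.le M
        linarith


lemma cont_g {b c α : ℝ} (h0 : 0 ≤ α) : Continuous (fun z : ℝ => (b + c * z ^ 2) ^ α) := by
  refine Continuous.rpow_const ?_ (fun z => Or.inr h0)
  continuity

lemma bound_integrable {b c M : ℝ} (hM : 0 ≤ M) :
    Integrable (fun z : ℝ => (1 + (b + c) ^ M) * (2 ^ (2 * M) * (2 + |z| ^ (2 * M))))
      (gaussianReal 0 1) := by
  have h : Integrable (fun z : ℝ => 2 + |z| ^ (2 * M)) (gaussianReal 0 1) := by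
    have := gauss_moment (p := 2 * M) (by linarith)
    exact (integrable_const (2:ℝ)).add this
  exact (h.const_mul _).const_mul _

lemma integrable_rpow_gauss {b c : ℝ} (hb : 0 ≤ b) (hc : 0 < c) {α : ℝ} (h0 : 0 ≤ α) :
    Integrable (fun z : ℝ => (b + c * z ^ 2) ^ α) (gaussianReal 0 1) := by
  refine Integrable.mono' (bound_integrable (b := b) (c := c) h0)
    (cont_g h0).aestronglyMeasurable (ae_of_all _ fun z => ?_)
  have hx : (0:ℝ) ≤ b + c * z ^ 2 := by positivity
  rw [Real.norm_eq_abs, abs_of_nonneg (Real.rpow_nonneg hx α)]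
  exact key_bound hb hc h0 le_rfl z


lemma slope_abs_bound {x a : ℝ} (hx : 0 < x) (ha : 0 < a) (ha1 : a ≤ 1) :
    |(x ^ a - 1) / a| ≤ |Real.log x| * (x + 1) := by
  have hxa : x ^ a = Real.exp (a * Real.log x) := by
    rw [Real.rpow_def_of_pos hx, mul_comm]
  rcases le_total 1 x with h | h
  · have hlog : 0 ≤ Real.log x := Real.log_nonneg h
    have h1 : 1 ≤ x ^ a := Real.one_le_rpow h ha.le
    have hle : x ^ a ≤ x := by
      calc x ^ a ≤ x ^ (1:ℝ) := Real.rpow_le_rpow_of_exponent_le h ha1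
        _ = x := Real.rpow_one x
    -- exp u - 1 ≤ u * exp u
    have key : x ^ a - 1 ≤ a * Real.log x * x ^ a := by
      rw [hxa]
      set u := a * Real.log x with hu
      have hu0 : 0 ≤ u := mul_nonneg ha.le hlog
      have h2 : 1 - u ≤ Real.exp (-u) := by
        have := Real.add_one_le_exp (-u); linarith
      have h3 := mul_le_mul_of_nonneg_left h2 (Real.exp_pos u).le
      rw [← Real.exp_add] at h3
      simp only [add_neg_cancel, Real.exp_zero] at h3
      nlinarith [Real.exp_pos u]
    have key2 : x ^ a - 1 ≤ a * (Real.log x * x) := by nlinarith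
    rw [abs_div, abs_of_pos ha, abs_of_nonneg (by linarith : (0:ℝ) ≤ x ^ a - 1),
      div_le_iff₀ ha, abs_of_nonneg hlog]
    nlinarith
  · have hlog : Real.log x ≤ 0 := Real.log_nonpos hx.le h
    have h1 : x ^ a ≤ 1 := Real.rpow_le_one hx.le h ha.le
    have hpos : 0 < x ^ a := Real.rpow_pos_of_pos hx a
    have key : 1 - x ^ a ≤ a * (-Real.log x) := by
      rw [hxa]
      have := Real.add_one_le_exp (a * Real.log x)
      nlinarith
    rw [abs_div, abs_of_pos ha, abs_of_nonpos (by linarith : x ^ a - 1 ≤ 0),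
      div_le_iff₀ ha, abs_of_nonpos hlog]
    nlinarith
lemma log_abs_le {x : ℝ} (hx : 0 < x) : |Real.log x| ≤ x + 4 * x ^ (-(4:ℝ)⁻¹) := by
  have hr : (0:ℝ) ≤ x ^ (-(4:ℝ)⁻¹) := Real.rpow_nonneg hx.le _
  rcases le_total 1 x with h | h
  · rw [abs_of_nonneg (Real.log_nonneg h)]
    have := Real.log_le_sub_one_of_pos hx
    linarith
  · rw [abs_of_nonpos (Real.log_nonpos hx.le h)]
    have hinv : (1:ℝ) ≤ x⁻¹ := one_le_inv_iff₀.mpr ⟨hx, h⟩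
    have e1 : -Real.log x = 4 * Real.log (x⁻¹ ^ ((4:ℝ)⁻¹)) := by
      rw [Real.log_rpow (by positivity), Real.log_inv]; ring
    have e2 : Real.log (x⁻¹ ^ ((4:ℝ)⁻¹)) ≤ x⁻¹ ^ ((4:ℝ)⁻¹) := by
      have h' := Real.log_le_sub_one_of_pos (x := x⁻¹ ^ ((4:ℝ)⁻¹)) (by positivity)
      linarith
    have e3 : x⁻¹ ^ ((4:ℝ)⁻¹) = x ^ (-(4:ℝ)⁻¹) := by
      rw [Real.inv_rpow hx.le, ← Real.rpow_neg hx.le]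
    rw [e3] at e2
    rw [e1, e3]
    linarith


lemma tendsto_slope_rpow {x : ℝ} (hx : 0 < x) {a : ℕ → ℝ} (hne : ∀ n, a n ≠ 0)
    (hto : Tendsto a atTop (𝓝 0)) :
    Tendsto (fun n => (x ^ a n - 1) / a n) atTop (𝓝 (Real.log x)) := by
  have hd : HasDerivAt (fun t : ℝ => x ^ t) (Real.log x) 0 := by
    have h1 : HasDerivAt (fun t : ℝ => t * Real.log x) (1 * Real.log x) 0 :=
      (hasDerivAt_id 0).mul_const _
    have h2 := h1.exp
    simp only [zero_mul, Real.exp_zero, one_mul, mul_one] at h2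
    have heq : (fun t : ℝ => Real.exp (t * Real.log x)) = fun t : ℝ => x ^ t := by
      funext t; rw [Real.rpow_def_of_pos hx, mul_comm]
    rwa [heq] at h2
  have hslope := hasDerivAt_iff_tendsto_slope.mp hd
  have hsub : Tendsto a atTop (𝓝[≠] (0:ℝ)) :=
    tendsto_nhdsWithin_of_tendsto_nhds_of_eventually_within _ hto
      (Eventually.of_forall fun n => hne n)
  have := hslope.comp hsub
  refine this.congr fun n => ?_
  simp [Function.comp, slope_def_field, Real.rpow_zero]
noncomputable def Bnd (b c : ℝ) (z : ℝ) : ℝ :=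
  (b + c * z ^ 2 + 4 * c ^ (-(4:ℝ)⁻¹) * |z| ^ (-(2:ℝ)⁻¹)) * (b + c * z ^ 2 + 1)

lemma Bnd_integrable {b c : ℝ} (hb : 0 ≤ b) (hc : 0 < c) :
    Integrable (Bnd b c) (gaussianReal 0 1) := by
  set k := 4 * c ^ (-(4:ℝ)⁻¹) with hk
  have hA : Integrable (fun z : ℝ => (b + c * z ^ 2) ^ (2:ℕ)) (gaussianReal 0 1) := by
    refine (integrable_rpow_gauss hb hc (by norm_num : (0:ℝ) ≤ 2)).congr
      (ae_of_all _ fun z => ?_)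
    beta_reduce
    rw [show (2:ℝ) = ((2:ℕ):ℝ) by norm_num, Real.rpow_natCast]
  have hB : Integrable (fun z : ℝ => b + c * z ^ 2) (gaussianReal 0 1) := by
    refine (integrable_rpow_gauss hb hc (by norm_num : (0:ℝ) ≤ 1)).congr
      (ae_of_all _ fun z => ?_)
    simp [Real.rpow_one]
  have hq : Integrable (fun z : ℝ => |z| ^ (-(2:ℝ)⁻¹)) (gaussianReal 0 1) :=
    gauss_moment (by norm_num)
  have hq32 : Integrable (fun z : ℝ => |z| ^ ((3:ℝ)/2)) (gaussianReal 0 1) :=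
    gauss_moment (by norm_num)
  have hqx : Integrable (fun z : ℝ => |z| ^ (-(2:ℝ)⁻¹) * (b + c * z ^ 2)) (gaussianReal 0 1) := by
    have heq : (fun z : ℝ => |z| ^ (-(2:ℝ)⁻¹) * (b + c * z ^ 2))
        = fun z : ℝ => b * |z| ^ (-(2:ℝ)⁻¹) + c * |z| ^ ((3:ℝ)/2) := by
      funext z
      rcases eq_or_ne z 0 with rfl | hz
      · simp [Real.zero_rpow (by norm_num : (-(2:ℝ)⁻¹) ≠ 0),
          Real.zero_rpow (by norm_num : ((3:ℝ)/2) ≠ 0)]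
      · have h2 : |z| ^ (-(2:ℝ)⁻¹) * z ^ 2 = |z| ^ ((3:ℝ)/2) := by
          rw [← sq_abs z, ← Real.rpow_natCast |z| 2, ← Real.rpow_add (abs_pos.mpr hz)]
          norm_num
        calc |z| ^ (-(2:ℝ)⁻¹) * (b + c * z ^ 2)
            = b * |z| ^ (-(2:ℝ)⁻¹) + c * (|z| ^ (-(2:ℝ)⁻¹) * z ^ 2) := by ring
          _ = b * |z| ^ (-(2:ℝ)⁻¹) + c * |z| ^ ((3:ℝ)/2) := by rw [h2]
    rw [heq]
    exact (hq.const_mul b).add (hq32.const_mul c)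
  have heq2 : Bnd b c = fun z : ℝ =>
      ((b + c * z ^ 2) ^ (2:ℕ) + (b + c * z ^ 2))
        + (k * (|z| ^ (-(2:ℝ)⁻¹) * (b + c * z ^ 2)) + k * |z| ^ (-(2:ℝ)⁻¹)) := by
    funext z; simp only [Bnd, hk]; ring
  rw [heq2]
  exact (hA.add hB).add ((hqx.const_mul k).add (hq.const_mul k))

lemma exists_small {b c : ℝ} (hb : 0 ≤ b) (hc : 0 < c)
    (hlog : ∫ z, Real.log (b + c * z ^ 2) ∂(gaussianReal 0 1) < 0) :
    ∃ a : ℝ, 0 < a ∧ ∫ z, (b + c * z ^ 2) ^ a ∂(gaussianReal 0 1) < 1 := by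
  set μ := gaussianReal 0 1 with hμ
  have hae : ∀ᵐ z ∂μ, z ≠ 0 := by
    have hv : ∀ᵐ z ∂(volume : Measure ℝ), z ≠ 0 := by
      have h0 : {z : ℝ | ¬ z ≠ 0} = {0} := by ext z; simp
      rw [ae_iff, h0]
      exact measure_singleton 0
    exact hv.filter_mono (gaussianReal_absolutelyContinuous 0 one_ne_zero).ae_le
  set a : ℕ → ℝ := fun n => ((n:ℝ) + 1)⁻¹ with ha
  have hapos : ∀ n, 0 < a n := fun n => by positivity
  have ha1 : ∀ n, a n ≤ 1 := by
    intro n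
    rw [ha]
    simp only
    rw [inv_le_one_iff₀]
    right; push_cast; linarith [Nat.cast_nonneg (α := ℝ) n]
  have hato : Tendsto a atTop (𝓝 0) := by
    simpa [ha, one_div] using tendsto_one_div_add_atTop_nhds_zero_nat (𝕜 := ℝ)
  have hxpos : ∀ z : ℝ, z ≠ 0 → 0 < b + c * z ^ 2 := by
    intro z hz
    have : 0 < z ^ 2 := by positivity
    nlinarith
  have hmeas : ∀ n, AEStronglyMeasurable
      (fun z : ℝ => ((b + c * z ^ 2) ^ (a n) - 1) / a n) μ :=
    fun n => (((cont_g (b := b) (c := c) (hapos n).le).sub continuous_const).div_const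
      _).aestronglyMeasurable
  have hbound : ∀ n, ∀ᵐ z ∂μ, ‖((b + c * z ^ 2) ^ (a n) - 1) / a n‖ ≤ Bnd b c z := by
    intro n
    filter_upwards [hae] with z hz
    have hx : 0 < b + c * z ^ 2 := hxpos z hz
    rw [Real.norm_eq_abs]
    have step1 := slope_abs_bound hx (hapos n) (ha1 n)
    have l1 := log_abs_le hx
    have l2 : (b + c * z ^ 2) ^ (-(4:ℝ)⁻¹) ≤ c ^ (-(4:ℝ)⁻¹) * |z| ^ (-(2:ℝ)⁻¹) := by
      have hcz : 0 < c * z ^ 2 := by positivity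
      have step : (b + c * z ^ 2) ^ (-(4:ℝ)⁻¹) ≤ (c * z ^ 2) ^ (-(4:ℝ)⁻¹) :=
        Real.rpow_le_rpow_of_nonpos hcz (by linarith) (by norm_num)
      have e1 : (c * z ^ 2) ^ (-(4:ℝ)⁻¹) = c ^ (-(4:ℝ)⁻¹) * (z ^ 2) ^ (-(4:ℝ)⁻¹) :=
        Real.mul_rpow hc.le (sq_nonneg z)
      have e2 : (z ^ 2 : ℝ) ^ (-(4:ℝ)⁻¹) = |z| ^ (-(2:ℝ)⁻¹) := by
        rw [← sq_abs z, ← Real.rpow_natCast |z| 2, ← Real.rpow_mul (abs_nonneg z)]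
        norm_num
      rw [e1, e2] at step
      exact step
    have hq0 : (0:ℝ) ≤ |z| ^ (-(2:ℝ)⁻¹) := Real.rpow_nonneg (abs_nonneg z) _
    have hc4 : (0:ℝ) ≤ c ^ (-(4:ℝ)⁻¹) := Real.rpow_nonneg hc.le _
    have hr4 : (0:ℝ) ≤ (b + c * z ^ 2) ^ (-(4:ℝ)⁻¹) := Real.rpow_nonneg hx.le _
    calc |((b + c * z ^ 2) ^ (a n) - 1) / a n|
        ≤ |Real.log (b + c * z ^ 2)| * ((b + c * z ^ 2) + 1) := step1
      _ ≤ Bnd b c z := by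
          unfold Bnd
          have habs : (0:ℝ) ≤ |Real.log (b + c * z ^ 2)| := abs_nonneg _
          nlinarith [abs_nonneg (Real.log (b + c * z ^ 2))]
  have hlim : ∀ᵐ z ∂μ, Tendsto (fun n => ((b + c * z ^ 2) ^ (a n) - 1) / a n) atTop
      (𝓝 (Real.log (b + c * z ^ 2))) := by
    filter_upwards [hae] with z hz
    exact tendsto_slope_rpow (hxpos z hz) (fun n => (hapos n).ne') hato
  have hDCT := tendsto_integral_of_dominated_convergence (μ := μ) (Bnd b c) hmeas
    (Bnd_integrable hb hc) hbound hlim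
  obtain ⟨n, hn⟩ := (hDCT.eventually_lt_const hlog).exists
  refine ⟨a n, hapos n, ?_⟩
  have hint : Integrable (fun z : ℝ => (b + c * z ^ 2) ^ (a n)) μ :=
    integrable_rpow_gauss hb hc (hapos n).le
  have heval : ∫ z, ((b + c * z ^ 2) ^ (a n) - 1) / a n ∂μ
      = ((∫ z, (b + c * z ^ 2) ^ (a n) ∂μ) - 1) / a n := by
    rw [integral_div, integral_sub hint (integrable_const 1), integral_const]
    simp [hμ]
  rw [heval, div_lt_iff₀ (hapos n), zero_mul] at hn
  linarith
lemma exists_large {b c : ℝ} (hb : 0 ≤ b) (hc : 0 < c) {a₀ : ℝ} (ha₀ : 0 < a₀) :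
    ∃ A : ℝ, a₀ < A ∧ 1 < ∫ z, (b + c * z ^ 2) ^ A ∂(gaussianReal 0 1) := by
  set μ := gaussianReal 0 1 with hμ
  set r := Real.sqrt (2 / c) with hr
  set E := {z : ℝ | r ≤ |z|} with hE
  have hE_meas : MeasurableSet E := measurableSet_le measurable_const measurable_abs
  have hvolE : (volume : Measure ℝ) E ≠ 0 := by
    have hsub : Ici r ⊆ E := fun z hz => le_trans hz (le_abs_self z)
    have := measure_mono (μ := (volume : Measure ℝ)) hsub
    rw [Real.volume_Ici] at this
    simp only [top_le_iff] at this
    simp [this]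
  have hEpos : 0 < μ E := by
    refine lt_of_le_of_ne (zero_le) (Ne.symm fun h0 => hvolE ?_)
    exact gaussianReal_absolutelyContinuous' 0 one_ne_zero h0
  have hm : 0 < (μ E).toReal :=
    ENNReal.toReal_pos hEpos.ne' (measure_ne_top μ E)
  have h2le : ∀ z ∈ E, (2:ℝ) ≤ b + c * z ^ 2 := by
    intro z hz
    have hrz : r ≤ |z| := hz
    have hr0 : 0 ≤ r := Real.sqrt_nonneg _
    have hr2 : r ^ 2 = 2 / c := Real.sq_sqrt (by positivity)
    have : r ^ 2 ≤ z ^ 2 := by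
      rw [← sq_abs z]
      exact pow_le_pow_left₀ hr0 hrz 2
    have : 2 / c ≤ z ^ 2 := by rw [← hr2]; exact this
    have h2 : 2 ≤ c * z ^ 2 := by
      rw [div_le_iff₀ hc] at this
      linarith [this]
    linarith
  have htend : Tendsto (fun A : ℝ => (2:ℝ) ^ A * (μ E).toReal) atTop atTop := by
    have h1 : Tendsto (fun A : ℝ => (2:ℝ) ^ A) atTop atTop := by
      have heq : (fun A : ℝ => (2:ℝ) ^ A) = fun A => Real.exp (Real.log 2 * A) := by
        funext A; rw [Real.rpow_def_of_pos (by norm_num)]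
      rw [heq]
      exact Real.tendsto_exp_atTop.comp
        (Tendsto.const_mul_atTop (Real.log_pos (by norm_num)) tendsto_id)
    exact h1.atTop_mul_const hm
  obtain ⟨A, hA1, hAa⟩ := ((htend.eventually_gt_atTop 1).and (eventually_gt_atTop a₀)).exists
  have hA0 : 0 ≤ A := le_of_lt (lt_trans ha₀ hAa)
  refine ⟨A, hAa, ?_⟩
  have hint : Integrable (fun z : ℝ => (b + c * z ^ 2) ^ A) μ :=
    integrable_rpow_gauss hb hc hA0
  have step1 : (2:ℝ) ^ A * (μ E).toReal = ∫ _ in E, (2:ℝ) ^ A ∂μ := by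
    rw [setIntegral_const]; simp [mul_comm, Measure.real]
  have step2 : ∫ _ in E, (2:ℝ) ^ A ∂μ ≤ ∫ z in E, (b + c * z ^ 2) ^ A ∂μ := by
    refine setIntegral_mono_on ((integrableOn_const_iff (C := (2:ℝ) ^ A)).mpr (Or.inr ?_)) hint.integrableOn
      hE_meas (fun z hz => ?_)
    · exact lt_of_le_of_lt (measure_mono (Set.subset_univ E)) (by simp [hμ])
    · exact Real.rpow_le_rpow (by norm_num) (h2le z hz) hA0
  have step3 : ∫ z in E, (b + c * z ^ 2) ^ A ∂μ ≤ ∫ z, (b + c * z ^ 2) ^ A ∂μ :=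
    setIntegral_le_integral hint (ae_of_all _ fun z => Real.rpow_nonneg (by positivity) A)
  linarith
lemma gauss_ae_ne_zero : ∀ᵐ z ∂(gaussianReal 0 1), z ≠ (0:ℝ) := by
  have hv : ∀ᵐ z ∂(volume : Measure ℝ), z ≠ 0 := by
    have h0 : {z : ℝ | ¬ z ≠ 0} = {0} := by ext z; simp
    rw [ae_iff, h0]
    exact measure_singleton 0
  exact hv.filter_mono (gaussianReal_absolutelyContinuous 0 one_ne_zero).ae_le

lemma contAt_F {b c : ℝ} (hb : 0 ≤ b) (hc : 0 < c) {α₀ : ℝ} (hα₀ : 0 < α₀) :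
    ContinuousAt (fun α : ℝ => ∫ z, (b + c * z ^ 2) ^ α ∂(gaussianReal 0 1)) α₀ := by
  have hnhds : Set.Ioo (0:ℝ) (α₀ + 1) ∈ 𝓝 α₀ :=
    isOpen_Ioo.mem_nhds ⟨hα₀, lt_add_one α₀⟩
  refine continuousAt_of_dominated ?_ ?_
    (bound_integrable (b := b) (c := c) (M := α₀ + 1) (by linarith)) ?_
  · filter_upwards [hnhds] with α hα
    exact (cont_g hα.1.le).aestronglyMeasurable
  · filter_upwards [hnhds] with α hα
    refine ae_of_all _ fun z => ?_
    have hx : (0:ℝ) ≤ b + c * z ^ 2 := by positivity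
    rw [Real.norm_eq_abs, abs_of_nonneg (Real.rpow_nonneg hx α)]
    exact key_bound hb hc hα.1.le hα.2.le z
  · filter_upwards [gauss_ae_ne_zero] with z hz
    have hx : 0 < b + c * z ^ 2 := by positivity
    exact ContinuousAt.rpow continuousAt_const continuousAt_id (Or.inl hx.ne')

lemma uniq_aux {b c : ℝ} (hb : 0 ≤ b) (hc : 0 < c)
    (hlog : ∫ z, Real.log (b + c * z ^ 2) ∂(gaussianReal 0 1) < 0)
    {α₁ α₂ : ℝ} (h1 : 0 < α₁) (h12 : α₁ < α₂)
    (hf1 : ∫ z, (b + c * z ^ 2) ^ α₁ ∂(gaussianReal 0 1) = 1)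
    (hf2 : ∫ z, (b + c * z ^ 2) ^ α₂ ∂(gaussianReal 0 1) = 1) : False := by
  set μ := gaussianReal 0 1 with hμ
  have h2 : 0 < α₂ := lt_trans h1 h12
  set t := α₁ / α₂ with ht
  have ht0 : 0 < t := div_pos h1 h2
  have ht1 : t < 1 := (div_lt_one h2).mpr h12
  set g : ℝ → ℝ := fun z => t * (b + c * z ^ 2) ^ α₂ + (1 - t) - (b + c * z ^ 2) ^ α₁
    with hg
  have hxpos : ∀ z : ℝ, z ≠ 0 → 0 < b + c * z ^ 2 := by
    intro z hz
    positivity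
  have hkey : ∀ z : ℝ, z ≠ 0 →
      (b + c * z ^ 2) ^ α₁ ≤ t * (b + c * z ^ 2) ^ α₂ + (1 - t)
        ∧ ((b + c * z ^ 2) ≠ 1 → (b + c * z ^ 2) ^ α₁ < t * (b + c * z ^ 2) ^ α₂ + (1 - t)) := by
    intro z hz
    have hx := hxpos z hz
    set x := b + c * z ^ 2 with hxdef
    have hxa : ∀ s : ℝ, x ^ s = Real.exp (s * Real.log x) := fun s => by
      rw [Real.rpow_def_of_pos hx, mul_comm]
    have hcomb : t * (α₂ * Real.log x) = α₁ * Real.log x := by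
      rw [ht]; field_simp
    constructor
    · have := convexOn_exp.2 (Set.mem_univ (α₂ * Real.log x)) (Set.mem_univ (0:ℝ))
        ht0.le (by linarith : (0:ℝ) ≤ 1 - t) (by ring)
      simp only [smul_eq_mul, Real.exp_zero, mul_one, mul_zero, add_zero] at this
      rw [hcomb] at this
      rw [hxa α₁, hxa α₂]
      linarith [this]
    · intro hx1
      have hlogne : α₂ * Real.log x ≠ 0 := by
        have : Real.log x ≠ 0 := by
          intro h0
          rcases (Real.log_eq_zero).mp h0 with h | h | h
          · exact hx.ne' h
          · exact hx1 h
          · linarith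
        exact mul_ne_zero h2.ne' this
      have := strictConvexOn_exp.2 (Set.mem_univ (α₂ * Real.log x)) (Set.mem_univ (0:ℝ))
        hlogne ht0 (by linarith : (0:ℝ) < 1 - t) (by ring)
      simp only [smul_eq_mul, Real.exp_zero, mul_one, mul_zero, add_zero] at this
      rw [hcomb] at this
      rw [hxa α₁, hxa α₂]
      linarith [this]
  have hint1 : Integrable (fun z : ℝ => (b + c * z ^ 2) ^ α₁) μ :=
    integrable_rpow_gauss hb hc h1.le
  have hint2 : Integrable (fun z : ℝ => (b + c * z ^ 2) ^ α₂) μ :=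
    integrable_rpow_gauss hb hc h2.le
  have hg_int : Integrable g μ := by
    refine Integrable.sub (Integrable.add (hint2.const_mul t) (integrable_const _)) hint1
  have hg_nonneg : 0 ≤ᵐ[μ] g := by
    filter_upwards [gauss_ae_ne_zero] with z hz
    have := (hkey z hz).1
    simp only [hg, Pi.zero_apply]
    linarith
  have hadd : Integrable (fun z : ℝ => t * (b + c * z ^ 2) ^ α₂ + (1 - t)) μ :=
    (hint2.const_mul t).add (integrable_const _)
  have hg_zero : ∫ z, g z ∂μ = 0 := by
    rw [hg]
    simp only
    rw [integral_sub hadd hint1,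
      integral_add (hint2.const_mul t) (integrable_const _), integral_const_mul,
      integral_const, hf1, hf2]
    simp [hμ]
  have hgae : g =ᵐ[μ] 0 := (integral_eq_zero_iff_of_nonneg_ae hg_nonneg hg_int).mp hg_zero
  have hlog0 : (fun z : ℝ => Real.log (b + c * z ^ 2)) =ᵐ[μ] 0 := by
    filter_upwards [hgae, gauss_ae_ne_zero] with z hgz hz
    have hx1 : b + c * z ^ 2 = 1 := by
      by_contra hne
      have hstrict := (hkey z hz).2 hne
      simp only [hg, Pi.zero_apply] at hgz
      linarith
    simp [hx1]
  rw [integral_congr_ae hlog0] at hlog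
  simp at hlog
/-- If `Z` is standard Gaussian and `b ≥ 0`, `c > 0` satisfy
`E[log(b + cZ²)] < 0`, then there is a unique `α > 0` with `E[(b + cZ²)^α] = 1`. -/
theorem exists_unique_tail_index_gaussian
    {Ω : Type*} [MeasurableSpace Ω] (P : Measure Ω) [IsProbabilityMeasure P]
    (Z : Ω → ℝ) (hZ_meas : Measurable Z)
    (hZ_law : Measure.map Z P = gaussianReal 0 1)
    (b c : ℝ) (hb : 0 ≤ b) (hc : 0 < c)
    (hlog : ∫ ω, Real.log (b + c * Z ω ^ 2) ∂P < 0) :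
    ∃! α : ℝ, 0 < α ∧ ∫ ω, (b + c * Z ω ^ 2) ^ α ∂P = 1 := by
  have htrans : ∀ g : ℝ → ℝ, AEStronglyMeasurable g (gaussianReal 0 1) →
      ∫ ω, g (Z ω) ∂P = ∫ x, g x ∂(gaussianReal 0 1) := by
    intro g hg
    rw [← hZ_law]
    exact (integral_map hZ_meas.aemeasurable (hZ_law ▸ hg)).symm
  have hlog_meas : Measurable (fun z : ℝ => Real.log (b + c * z ^ 2)) :=
    Real.measurable_log.comp (by fun_prop)
  have hlogμ : ∫ z, Real.log (b + c * z ^ 2) ∂(gaussianReal 0 1) < 0 := by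
    have heq : ∫ ω, Real.log (b + c * Z ω ^ 2) ∂P
        = ∫ z, Real.log (b + c * z ^ 2) ∂(gaussianReal 0 1) :=
      htrans (fun z => Real.log (b + c * z ^ 2)) hlog_meas.aestronglyMeasurable
    rw [← heq]
    exact hlog
  obtain ⟨a₀, ha₀, hsmall⟩ := exists_small hb hc hlogμ
  obtain ⟨A, haA, hlarge⟩ := exists_large hb hc ha₀
  set F : ℝ → ℝ := fun α => ∫ z, (b + c * z ^ 2) ^ α ∂(gaussianReal 0 1) with hF
  have hcont : ContinuousOn F (Set.Icc a₀ A) := fun x hx =>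
    (contAt_F hb hc (lt_of_lt_of_le ha₀ hx.1)).continuousWithinAt
  have h1mem : (1:ℝ) ∈ Set.Icc (F a₀) (F A) := ⟨hsmall.le, hlarge.le⟩
  obtain ⟨α, hαmem, hFα⟩ := intermediate_value_Icc haA.le hcont h1mem
  have hαpos : 0 < α := lt_of_lt_of_le ha₀ hαmem.1
  have hPtoμ : ∀ β : ℝ, 0 < β → ∫ ω, (b + c * Z ω ^ 2) ^ β ∂P = F β :=
    fun β hβ => htrans (fun z => (b + c * z ^ 2) ^ β) (cont_g hβ.le).aestronglyMeasurable
  refine ⟨α, ⟨hαpos, by rw [hPtoμ α hαpos]; exact hFα⟩, ?_⟩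
  rintro y ⟨hy, hy1⟩
  have hyF : F y = 1 := by rw [← hPtoμ y hy]; exact hy1
  by_contra hne
  rcases lt_or_gt_of_ne hne with h | h
  · exact uniq_aux hb hc hlogμ hy h hyF hFα
  · exact uniq_aux hb hc hlogμ hαpos h hFα hyF
end
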